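/- arXiv:2405.07082 — 8 statements merged into one kernel-verified Lean document; each statement's English description precedes it below -/
import Mathlib

section
/- Let κ>0, μ∈ℝ, and define 𝒢_μ(θ₁,θ₂) = (sin((θ₂-θ₁)/2))^{2/κ} · exp((μ/κ)(θ₁+θ₂)) for θ₁ < θ₂ < θ₁+2π. Then 𝒢_μ satisfies the radial BPZ equation (κ/2)·(∂₁₁𝒢_μ)/𝒢_μ + cot((θ₂-θ₁)/2)·(∂₂𝒢_μ)/𝒢_μ − ((6−κ)/(4κ))/(sin((θ₂-θ₁)/2))² = (μ²−3)/(2κ). -/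
open Real

/-- the partition function `𝒢_μ` satisfies the first radial BPZ equation. -/
theorem Gmu_satisfies_first_radial_BPZ (κ μ : ℝ) (hκ : 0 < κ) (G : ℝ → ℝ → ℝ)
    (hG : ∀ θ₁ θ₂ : ℝ,
      G θ₁ θ₂ = Real.sin ((θ₂ - θ₁) / 2) ^ (2 / κ) * Real.exp (μ / κ * (θ₁ + θ₂))) :
    ∀ θ₁ θ₂ : ℝ, θ₁ < θ₂ → θ₂ < θ₁ + 2 * π →
      κ / 2 * deriv (fun x => deriv (fun x' => G x' θ₂) x) θ₁ / G θ₁ θ₂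
        + Real.cot ((θ₂ - θ₁) / 2) * deriv (fun y => G θ₁ y) θ₂ / G θ₁ θ₂
        - ((6 - κ) / (4 * κ)) / Real.sin ((θ₂ - θ₁) / 2) ^ 2
      = (μ ^ 2 - 3) / (2 * κ) := by
  intro θ₁ θ₂ h1 h2
  have hπ := Real.pi_pos
  set p : ℝ := 2 / κ with hpdef
  -- the function of the first variable
  set f1 : ℝ → ℝ := fun x => Real.sin ((θ₂ - x) / 2) ^ p * Real.exp (μ / κ * (x + θ₂))
    with hf1def
  set g1 : ℝ → ℝ := fun x =>
      f1 x * (μ / κ - 1 / κ * (Real.cos ((θ₂ - x) / 2) / Real.sin ((θ₂ - x) / 2)))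
    with hg1def
  -- elementary derivative facts (first variable)
  have hSd : ∀ x : ℝ, HasDerivAt (fun x => Real.sin ((θ₂ - x) / 2))
      (Real.cos ((θ₂ - x) / 2) * (-1 / 2)) x := by
    intro x
    have h0 : HasDerivAt (fun x : ℝ => (θ₂ - x) / 2) (-1 / 2) x := by
      simpa using ((hasDerivAt_id x).const_sub θ₂).div_const 2
    exact h0.sin
  have hCd : ∀ x : ℝ, HasDerivAt (fun x => Real.cos ((θ₂ - x) / 2))
      (Real.sin ((θ₂ - x) / 2) * (1 / 2)) x := by
    intro x
    have h0 : HasDerivAt (fun x : ℝ => (θ₂ - x) / 2) (-1 / 2) x := by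
      simpa using ((hasDerivAt_id x).const_sub θ₂).div_const 2
    have := h0.cos
    convert this using 1
    ring
  have hEd : ∀ x : ℝ, HasDerivAt (fun x => Real.exp (μ / κ * (x + θ₂)))
      (Real.exp (μ / κ * (x + θ₂)) * (μ / κ)) x := by
    intro x
    have h0 : HasDerivAt (fun x : ℝ => μ / κ * (x + θ₂)) (μ / κ) x := by
      simpa using ((hasDerivAt_id x).add_const θ₂).const_mul (μ / κ)
    exact h0.exp
  have hf1d : ∀ x : ℝ, 0 < Real.sin ((θ₂ - x) / 2) →
      HasDerivAt f1
        (Real.cos ((θ₂ - x) / 2) * (-1 / 2) * p * Real.sin ((θ₂ - x) / 2) ^ (p - 1)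
            * Real.exp (μ / κ * (x + θ₂))
          + Real.sin ((θ₂ - x) / 2) ^ p * (Real.exp (μ / κ * (x + θ₂)) * (μ / κ))) x := by
    intro x hs
    exact ((hSd x).rpow_const (Or.inl hs.ne')).mul (hEd x)
  -- on the strip, the first partial derivative equals g1
  have hderiv1 : ∀ x ∈ Set.Ioo (θ₂ - 2 * π) θ₂, deriv (fun x' => G x' θ₂) x = g1 x := by
    intro x hx
    have hs : 0 < Real.sin ((θ₂ - x) / 2) := by
      apply Real.sin_pos_of_pos_of_lt_pi
      · have := hx.2; linarith
      · have := hx.1; linarith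
    have hfun : (fun x' => G x' θ₂) = f1 := funext fun x' => hG x' θ₂
    rw [hfun, (hf1d x hs).deriv]
    have hsp : Real.sin ((θ₂ - x) / 2) ^ (p - 1)
        = Real.sin ((θ₂ - x) / 2) ^ p / Real.sin ((θ₂ - x) / 2) :=
      Real.rpow_sub_one hs.ne' p
    rw [hg1def, hf1def, hsp, hpdef]
    field_simp
    ring
  -- positivity at the base point
  have hs : 0 < Real.sin ((θ₂ - θ₁) / 2) := by
    apply Real.sin_pos_of_pos_of_lt_pi <;> [linarith; linarith]
  have hmem : θ₁ ∈ Set.Ioo (θ₂ - 2 * π) θ₂ := ⟨by linarith, h1⟩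
  have hev : (fun x => deriv (fun x' => G x' θ₂) x) =ᶠ[nhds θ₁] g1 :=
    Filter.eventually_of_mem (isOpen_Ioo.mem_nhds hmem) hderiv1
  have houter : deriv (fun x => deriv (fun x' => G x' θ₂) x) θ₁ = deriv g1 θ₁ :=
    hev.deriv_eq
  -- second derivative : derivative of g1 at θ₁
  have hq : HasDerivAt (fun x => Real.cos ((θ₂ - x) / 2) / Real.sin ((θ₂ - x) / 2))
      ((Real.sin ((θ₂ - θ₁) / 2) * (1 / 2) * Real.sin ((θ₂ - θ₁) / 2)
          - Real.cos ((θ₂ - θ₁) / 2) * (Real.cos ((θ₂ - θ₁) / 2) * (-1 / 2)))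
        / Real.sin ((θ₂ - θ₁) / 2) ^ 2) θ₁ :=
    (hCd θ₁).div (hSd θ₁) hs.ne'
  have hlin : HasDerivAt
      (fun x => μ / κ - 1 / κ * (Real.cos ((θ₂ - x) / 2) / Real.sin ((θ₂ - x) / 2)))
      (-(1 / κ * ((Real.sin ((θ₂ - θ₁) / 2) * (1 / 2) * Real.sin ((θ₂ - θ₁) / 2)
          - Real.cos ((θ₂ - θ₁) / 2) * (Real.cos ((θ₂ - θ₁) / 2) * (-1 / 2)))
        / Real.sin ((θ₂ - θ₁) / 2) ^ 2))) θ₁ :=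
    (hq.const_mul (1 / κ)).const_sub (μ / κ)
  have hg1d : deriv g1 θ₁ = _ := ((hf1d θ₁ hs).mul hlin).deriv
  -- second variable
  have hderiv2 : deriv (fun y => G θ₁ y) θ₂
      = Real.sin ((θ₂ - θ₁) / 2) ^ p * Real.exp (μ / κ * (θ₁ + θ₂))
          * (μ / κ + 1 / κ * (Real.cos ((θ₂ - θ₁) / 2) / Real.sin ((θ₂ - θ₁) / 2))) := by
    have hfun : (fun y => G θ₁ y)
        = fun y => Real.sin ((y - θ₁) / 2) ^ p * Real.exp (μ / κ * (θ₁ + y)) :=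
      funext fun y => hG θ₁ y
    have hS2 : HasDerivAt (fun y => Real.sin ((y - θ₁) / 2))
        (Real.cos ((θ₂ - θ₁) / 2) * (1 / 2)) θ₂ := by
      have h0 : HasDerivAt (fun y : ℝ => (y - θ₁) / 2) (1 / 2) θ₂ := by
        simpa using ((hasDerivAt_id θ₂).sub_const θ₁).div_const 2
      exact h0.sin
    have hE2 : HasDerivAt (fun y => Real.exp (μ / κ * (θ₁ + y)))
        (Real.exp (μ / κ * (θ₁ + θ₂)) * (μ / κ)) θ₂ := by
      have h0 : HasDerivAt (fun y : ℝ => μ / κ * (θ₁ + y)) (μ / κ) θ₂ := by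
        simpa using ((hasDerivAt_id θ₂).const_add θ₁).const_mul (μ / κ)
      exact h0.exp
    have hd : deriv (fun y => Real.sin ((y - θ₁) / 2) ^ p * Real.exp (μ / κ * (θ₁ + y))) θ₂ = _ :=
      ((hS2.rpow_const (p := p) (Or.inl hs.ne')).mul hE2).deriv
    rw [hfun, hd]
    have hsp : Real.sin ((θ₂ - θ₁) / 2) ^ (p - 1)
        = Real.sin ((θ₂ - θ₁) / 2) ^ p / Real.sin ((θ₂ - θ₁) / 2) :=
      Real.rpow_sub_one hs.ne' p
    rw [hsp, hpdef]
    field_simp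
    ring
  -- assemble
  have hg1v : g1 θ₁ = Real.sin ((θ₂ - θ₁) / 2) ^ p * Real.exp (μ / κ * (θ₁ + θ₂))
      * (μ / κ - 1 / κ * (Real.cos ((θ₂ - θ₁) / 2) / Real.sin ((θ₂ - θ₁) / 2))) := rfl
  have hT : 0 < Real.sin ((θ₂ - θ₁) / 2) ^ p := Real.rpow_pos_of_pos hs p
  have hE : 0 < Real.exp (μ / κ * (θ₁ + θ₂)) := Real.exp_pos _
  have hc2 : Real.cos ((θ₂ - θ₁) / 2) ^ 2 = 1 - Real.sin ((θ₂ - θ₁) / 2) ^ 2 := by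
    have := Real.sin_sq_add_cos_sq ((θ₂ - θ₁) / 2)
    linarith
  have hsp : Real.sin ((θ₂ - θ₁) / 2) ^ (p - 1)
      = Real.sin ((θ₂ - θ₁) / 2) ^ p / Real.sin ((θ₂ - θ₁) / 2) :=
    Real.rpow_sub_one hs.ne' p
  have hf1v : f1 θ₁ = Real.sin ((θ₂ - θ₁) / 2) ^ p * Real.exp (μ / κ * (θ₁ + θ₂)) := rfl
  rw [houter, hg1d, hf1v, hderiv2, hG θ₁ θ₂, Real.cot_eq_cos_div_sin, hsp, hpdef]
  set s := Real.sin ((θ₂ - θ₁) / 2)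
  set c := Real.cos ((θ₂ - θ₁) / 2)
  set T := s ^ ((2:ℝ) / κ)
  set E := Real.exp (μ / κ * (θ₁ + θ₂))
  field_simp
  ring_nf
  linear_combination (24 - 4 * κ) * hc2
end

section
/- Let κ>0, μ∈ℝ, and 𝒢_μ(θ₁,θ₂) = (sin((θ₂-θ₁)/2))^{2/κ} · exp((μ/κ)(θ₁+θ₂)). Then 𝒢_μ satisfies (κ/2)·(∂₂₂𝒢_μ)/𝒢_μ − cot((θ₂-θ₁)/2)·(∂₁𝒢_μ)/𝒢_μ − ((6−κ)/(4κ))/(sin((θ₂-θ₁)/2))² = (μ²−3)/(2κ) for all θ₁ < θ₂ < θ₁+2π. -/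
open Real

/-- the partition function `𝒢_μ` satisfies the second radial BPZ equation. -/
theorem Gmu_satisfies_second_radial_BPZ (κ μ : ℝ) (hκ : 0 < κ) (G : ℝ → ℝ → ℝ)
    (hG : ∀ θ₁ θ₂ : ℝ,
      G θ₁ θ₂ = Real.sin ((θ₂ - θ₁) / 2) ^ (2 / κ) * Real.exp (μ / κ * (θ₁ + θ₂))) :
    ∀ θ₁ θ₂ : ℝ, θ₁ < θ₂ → θ₂ < θ₁ + 2 * π →
      κ / 2 * deriv (fun y => deriv (fun y' => G θ₁ y') y) θ₂ / G θ₁ θ₂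
        - Real.cot ((θ₂ - θ₁) / 2) * deriv (fun x => G x θ₂) θ₁ / G θ₁ θ₂
        - ((6 - κ) / (4 * κ)) / Real.sin ((θ₂ - θ₁) / 2) ^ 2
      = (μ ^ 2 - 3) / (2 * κ) := by
  intro θ₁ θ₂ hlt hlt2
  have hκ' : κ ≠ 0 := ne_of_gt hκ
  have hsin : ∀ y ∈ Set.Ioo θ₁ (θ₁ + 2 * π), 0 < Real.sin ((y - θ₁) / 2) := by
    intro y hy
    apply Real.sin_pos_of_pos_of_lt_pi
    · linarith [hy.1]
    · linarith [hy.2]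
  have hmem : θ₂ ∈ Set.Ioo θ₁ (θ₁ + 2 * π) := ⟨hlt, hlt2⟩
  have hs : 0 < Real.sin ((θ₂ - θ₁) / 2) := hsin θ₂ hmem
  -- basic derivative facts
  have hsin' : ∀ y : ℝ, HasDerivAt (fun z => Real.sin ((z - θ₁) / 2))
      (Real.cos ((y - θ₁) / 2) * (1 / 2)) y := by
    intro y
    have h := (Real.hasDerivAt_sin ((y - θ₁) / 2)).comp y
      (((hasDerivAt_id y).sub_const θ₁).div_const 2)
    exact h.congr_deriv (by ring)
  have hcos' : ∀ y : ℝ, HasDerivAt (fun z => Real.cos ((z - θ₁) / 2))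
      (-Real.sin ((y - θ₁) / 2) * (1 / 2)) y := by
    intro y
    have h := (Real.hasDerivAt_cos ((y - θ₁) / 2)).comp y
      (((hasDerivAt_id y).sub_const θ₁).div_const 2)
    exact h.congr_deriv (by ring)
  have hexp' : ∀ y : ℝ, HasDerivAt (fun z => Real.exp (μ / κ * (θ₁ + z)))
      (Real.exp (μ / κ * (θ₁ + y)) * (μ / κ)) y := by
    intro y
    have h := (Real.hasDerivAt_exp (μ / κ * (θ₁ + y))).comp y
      (((hasDerivAt_id y).const_add θ₁).const_mul (μ / κ))
    exact h.congr_deriv (by ring)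
  -- the first θ₂-derivative, valid on a neighborhood
  set D1 : ℝ → ℝ := fun y =>
      Real.cos ((y - θ₁) / 2) * (1 / 2) * (2 / κ) * Real.sin ((y - θ₁) / 2) ^ (2 / κ - 1)
        * Real.exp (μ / κ * (θ₁ + y))
      + Real.sin ((y - θ₁) / 2) ^ (2 / κ) * (Real.exp (μ / κ * (θ₁ + y)) * (μ / κ)) with hD1_def
  have hDG : ∀ y ∈ Set.Ioo θ₁ (θ₁ + 2 * π), HasDerivAt (fun y' => G θ₁ y') (D1 y) y := by
    intro y hy
    have hGfun : (fun y' => G θ₁ y') = fun y' =>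
        Real.sin ((y' - θ₁) / 2) ^ (2 / κ) * Real.exp (μ / κ * (θ₁ + y')) := by
      funext y'; rw [hG]
    rw [hGfun]
    have hne : Real.sin ((y - θ₁) / 2) ≠ 0 := (hsin y hy).ne'
    exact ((hsin' y).rpow_const (Or.inl hne)).mul (hexp' y)
  have hEq : (fun y => deriv (fun y' => G θ₁ y') y) =ᶠ[nhds θ₂] D1 := by
    filter_upwards [isOpen_Ioo.mem_nhds hmem] with y hy
    exact (hDG y hy).deriv
  have hd2 : deriv (fun y => deriv (fun y' => G θ₁ y') y) θ₂ = deriv D1 θ₂ := hEq.deriv_eq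
  -- second derivative of D1 at θ₂
  have hne₂ : Real.sin ((θ₂ - θ₁) / 2) ≠ 0 := hs.ne'
  have hT1 : HasDerivAt (fun y =>
      Real.cos ((y - θ₁) / 2) * (1 / 2) * (2 / κ) * Real.sin ((y - θ₁) / 2) ^ (2 / κ - 1)
        * Real.exp (μ / κ * (θ₁ + y)))
      (((-Real.sin ((θ₂ - θ₁) / 2) * (1 / 2)) * (1 / 2) * (2 / κ)
          * Real.sin ((θ₂ - θ₁) / 2) ^ (2 / κ - 1)
        + Real.cos ((θ₂ - θ₁) / 2) * (1 / 2) * (2 / κ)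
          * (Real.cos ((θ₂ - θ₁) / 2) * (1 / 2) * (2 / κ - 1)
              * Real.sin ((θ₂ - θ₁) / 2) ^ (2 / κ - 1 - 1)))
          * Real.exp (μ / κ * (θ₁ + θ₂))
        + Real.cos ((θ₂ - θ₁) / 2) * (1 / 2) * (2 / κ)
            * Real.sin ((θ₂ - θ₁) / 2) ^ (2 / κ - 1)
          * (Real.exp (μ / κ * (θ₁ + θ₂)) * (μ / κ))) θ₂ := by
    exact ((((hcos' θ₂).mul_const (1 / 2)).mul_const (2 / κ)).mul
      ((hsin' θ₂).rpow_const (Or.inl hne₂))).mul (hexp' θ₂)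
  have hT2 : HasDerivAt (fun y =>
      Real.sin ((y - θ₁) / 2) ^ (2 / κ) * (Real.exp (μ / κ * (θ₁ + y)) * (μ / κ)))
      (Real.cos ((θ₂ - θ₁) / 2) * (1 / 2) * (2 / κ)
          * Real.sin ((θ₂ - θ₁) / 2) ^ (2 / κ - 1)
          * (Real.exp (μ / κ * (θ₁ + θ₂)) * (μ / κ))
        + Real.sin ((θ₂ - θ₁) / 2) ^ (2 / κ)
          * (Real.exp (μ / κ * (θ₁ + θ₂)) * (μ / κ) * (μ / κ))) θ₂ := by
    exact ((hsin' θ₂).rpow_const (Or.inl hne₂)).mul ((hexp' θ₂).mul_const (μ / κ))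
  have hD1' := hT1.add hT2
  have hderivD1 : deriv D1 θ₂ = _ := hD1'.deriv
  -- first θ₁-derivative
  have hsin1 : HasDerivAt (fun x => Real.sin ((θ₂ - x) / 2))
      (Real.cos ((θ₂ - θ₁) / 2) * (-(1 / 2))) θ₁ := by
    have h := (Real.hasDerivAt_sin ((θ₂ - θ₁) / 2)).comp θ₁
      (((hasDerivAt_id θ₁).const_sub θ₂).div_const 2)
    exact h.congr_deriv (by ring)
  have hexp1 : HasDerivAt (fun x => Real.exp (μ / κ * (x + θ₂)))
      (Real.exp (μ / κ * (θ₁ + θ₂)) * (μ / κ)) θ₁ := by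
    have h := (Real.hasDerivAt_exp (μ / κ * (θ₁ + θ₂))).comp θ₁
      (((hasDerivAt_id θ₁).add_const θ₂).const_mul (μ / κ))
    exact h.congr_deriv (by ring)
  have hDG1 : HasDerivAt (fun x => G x θ₂)
      (Real.cos ((θ₂ - θ₁) / 2) * (-(1 / 2)) * (2 / κ)
          * Real.sin ((θ₂ - θ₁) / 2) ^ (2 / κ - 1) * Real.exp (μ / κ * (θ₁ + θ₂))
        + Real.sin ((θ₂ - θ₁) / 2) ^ (2 / κ)
          * (Real.exp (μ / κ * (θ₁ + θ₂)) * (μ / κ))) θ₁ := by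
    have hGfun : (fun x => G x θ₂) = fun x =>
        Real.sin ((θ₂ - x) / 2) ^ (2 / κ) * Real.exp (μ / κ * (x + θ₂)) := by
      funext x; rw [hG]
    rw [hGfun]
    exact (hsin1.rpow_const (Or.inl hne₂)).mul hexp1
  rw [hd2, hderivD1, hDG1.deriv, hG θ₁ θ₂, Real.cot_eq_cos_div_sin]
  have e1 : Real.sin ((θ₂ - θ₁) / 2) ^ (2 / κ - 1)
      = Real.sin ((θ₂ - θ₁) / 2) ^ (2 / κ) / Real.sin ((θ₂ - θ₁) / 2) := by
    rw [Real.rpow_sub hs, Real.rpow_one]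
  have e2 : Real.sin ((θ₂ - θ₁) / 2) ^ (2 / κ - 1 - 1)
      = Real.sin ((θ₂ - θ₁) / 2) ^ (2 / κ) / Real.sin ((θ₂ - θ₁) / 2)
          / Real.sin ((θ₂ - θ₁) / 2) := by
    rw [Real.rpow_sub hs, Real.rpow_sub hs, Real.rpow_one]
  rw [e1, e2]
  have hP : (0:ℝ) < Real.sin ((θ₂ - θ₁) / 2) ^ (2 / κ) := Real.rpow_pos_of_pos hs _
  have hE : (0:ℝ) < Real.exp (μ / κ * (θ₁ + θ₂)) := Real.exp_pos _
  have hpyth := Real.sin_sq_add_cos_sq ((θ₂ - θ₁) / 2)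
  set s := Real.sin ((θ₂ - θ₁) / 2)
  set c := Real.cos ((θ₂ - θ₁) / 2)
  set P := s ^ (2 / κ)
  set E := Real.exp (μ / κ * (θ₁ + θ₂))
  field_simp
  ring_nf
  linear_combination (24 - 4 * κ) * hpyth
end

section
/- Fix κ∈(0,8) and α > 1−κ/8. Let φ be the unique C² solution on (0,1) of u(1−u)φ'' − ((3κ−8)/(2κ))(2u−1)φ' + (8α/κ)φ = 0 with φ(1/2)=1 and φ'(1/2)=0. Then there exists u∈(0,1) with φ(u) ≤ 0. -/
open Real Set

set_option maxHeartbeats 1000000 in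
/-- for `α > 1 - κ/8`, the solution of Euler's hypergeometric IVP
takes a nonpositive value somewhere in `(0,1)`. -/
theorem Euler_hypergeometric_supercritical_nonpositive (κ α : ℝ)
    (hκ : 0 < κ) (hκ8 : κ < 8) (hα : 1 - κ / 8 < α)
    (φ : ℝ → ℝ)
    (hC : ContDiffOn ℝ 2 φ (Ioo (0 : ℝ) 1))
    (hode : ∀ u ∈ Ioo (0 : ℝ) 1,
      u * (1 - u) * deriv (deriv φ) u - (3 * κ - 8) / (2 * κ) * (2 * u - 1) * deriv φ u
        + 8 * α / κ * φ u = 0)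
    (h1 : φ (1 / 2) = 1) (h2 : deriv φ (1 / 2) = 0) :
    ∃ u ∈ Ioo (0 : ℝ) 1, φ u ≤ 0 := by
  by_contra hcon
  push_neg at hcon
  set β : ℝ := (8 - κ) / (2 * κ) with hβ
  set μ : ℝ := (8 * α - 8 + κ) / κ with hμ
  have hβpos : 0 < β := div_pos (by linarith) (by linarith)
  have hμpos : 0 < μ := div_pos (by linarith) hκ
  have hopen : IsOpen (Ioo (0:ℝ) 1) := isOpen_Ioo
  have hd1 : ∀ u ∈ Ioo (0:ℝ) 1, HasDerivAt φ (deriv φ u) u := by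
    intro u hu
    exact ((hC.differentiableOn (by norm_num)).differentiableAt
      (hopen.mem_nhds hu)).hasDerivAt
  have hC1 : ContDiffOn ℝ 1 (deriv φ) (Ioo (0:ℝ) 1) :=
    hC.deriv_of_isOpen hopen (by norm_num)
  have hd2 : ∀ u ∈ Ioo (0:ℝ) 1, HasDerivAt (deriv φ) (deriv (deriv φ) u) u := by
    intro u hu
    exact ((hC1.differentiableOn (by norm_num)).differentiableAt
      (hopen.mem_nhds hu)).hasDerivAt
  set W : ℝ → ℝ := fun u => β * (1 - 2*u) * φ u - u * (1-u) * deriv φ u with hWdef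
  -- W' = μ φ
  have hW : ∀ u ∈ Ioo (0:ℝ) 1, HasDerivAt W (μ * φ u) u := by
    intro u hu
    have hA : HasDerivAt (fun x : ℝ => β * (1 - 2*x)) (β * (-2)) u := by
      have := (((hasDerivAt_id u).const_mul (2:ℝ)).const_sub 1).const_mul β
      simpa using this
    have hB : HasDerivAt (fun x : ℝ => x * (1-x)) (1 - 2*u) u := by
      have := (hasDerivAt_id u).mul ((hasDerivAt_id u).const_sub 1)
      refine this.congr_deriv ?_
      simp only [id_eq]
      ring
    have := (hA.mul (hd1 u hu)).sub (hB.mul (hd2 u hu))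
    refine this.congr_deriv ?_
    have hode' := hode u hu
    have hκ' : κ ≠ 0 := ne_of_gt hκ
    rw [hμ, hβ]
    field_simp at hode' ⊢
    linear_combination (-1) * hode'
  have hWcont : ContinuousOn W (Ioo (0:ℝ) 1) := fun u hu =>
    ((hW u hu).continuousAt).continuousWithinAt
  have hφcont : ContinuousOn φ (Ioo (0:ℝ) 1) := fun u hu =>
    ((hd1 u hu).continuousAt).continuousWithinAt
  have hW0 : W (1/2) = 0 := by
    simp only [hWdef, h1, h2]
    norm_num
  -- W is strictly monotone on any closed subinterval of (0,1)
  have hWmono : ∀ a b : ℝ, 0 < a → b < 1 → StrictMonoOn W (Icc a b) := by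
    intro a b ha hb
    apply strictMonoOn_of_deriv_pos (convex_Icc a b)
    · apply hWcont.mono
      intro x hx
      exact ⟨lt_of_lt_of_le ha hx.1, lt_of_le_of_lt hx.2 hb⟩
    · intro x hx
      rw [interior_Icc] at hx
      have hx' : x ∈ Ioo (0:ℝ) 1 := ⟨lt_trans ha hx.1, lt_trans hx.2 hb⟩
      rw [(hW x hx').deriv]
      exact mul_pos hμpos (hcon x hx')
  -- δ := W (3/4) > 0
  obtain ⟨δ, hδdef⟩ : ∃ d : ℝ, d = W (3/4) := ⟨_, rfl⟩
  have hδ : 0 < δ := by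
    rw [hδdef]
    have := hWmono (1/2) (3/4) (by norm_num) (by norm_num)
      (show (1/2:ℝ) ∈ Icc (1/2:ℝ) (3/4) by norm_num)
      (show (3/4:ℝ) ∈ Icc (1/2:ℝ) (3/4) by norm_num) (by norm_num)
    rw [hW0] at this
    exact this
  -- the bad point
  set M : ℝ := max 2 ((φ (3/4) - δ * Real.log (1/4) + 1)/δ) with hM
  have hM2 : (2:ℝ) ≤ M := le_max_left _ _
  have hexp : Real.exp (-M) < 1/4 := by
    have h4 : (4:ℝ) < Real.exp 2 := by
      have := Real.exp_one_gt_d9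
      have h2 : Real.exp 2 = Real.exp 1 * Real.exp 1 := by
        rw [← Real.exp_add]; norm_num
      nlinarith
    have : Real.exp (-M) ≤ Real.exp (-2) := Real.exp_le_exp.2 (by linarith)
    have h2' : Real.exp (-2) = (Real.exp 2)⁻¹ := by
      rw [Real.exp_neg]
    have : Real.exp (-2) < 1/4 := by
      rw [h2']
      rw [inv_lt_iff_one_lt_mul₀ (by positivity)]
      nlinarith [Real.exp_pos 2]
    linarith
  set u₁ : ℝ := 1 - Real.exp (-M) with hu₁
  have hu₁mem : u₁ ∈ Ioo (0:ℝ) 1 := by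
    constructor
    · simp only [hu₁]; linarith
    · simp only [hu₁]; have := Real.exp_pos (-M); linarith
  have h34u₁ : (3/4:ℝ) < u₁ := by simp only [hu₁]; linarith
  -- W ≥ δ on [3/4, u₁]
  have hWge : ∀ x ∈ Icc (3/4:ℝ) u₁, δ ≤ W x := by
    intro x hx
    rw [hδdef]
    rcases eq_or_lt_of_le hx.1 with h | h
    · rw [← h]
    · exact le_of_lt (hWmono (3/4) u₁ (by norm_num) hu₁mem.2
        ⟨le_refl _, by linarith [hx.1]⟩ hx h)
  -- h := φ - δ log(1-·) is antitone on [3/4, u₁]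
  set g : ℝ → ℝ := fun x => φ x - δ * Real.log (1-x) with hg
  have hganti : AntitoneOn g (Icc (3/4:ℝ) u₁) := by
    have hsub : Icc (3/4:ℝ) u₁ ⊆ Ioo (0:ℝ) 1 := fun x hx =>
      ⟨by linarith [hx.1], lt_of_le_of_lt hx.2 hu₁mem.2⟩
    have hgd : ∀ x ∈ Ioo (3/4:ℝ) u₁, HasDerivAt g (deriv φ x + δ/(1-x)) x := by
      intro x hx
      have hx' : x ∈ Ioo (0:ℝ) 1 := hsub ⟨le_of_lt hx.1, le_of_lt hx.2⟩
      have h1x : (0:ℝ) < 1 - x := by linarith [hx'.2]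
      have hlog : HasDerivAt (fun y : ℝ => Real.log (1-y)) ((-1)/(1-x)) x :=
        ((hasDerivAt_id x).const_sub 1).log (ne_of_gt h1x)
      have := (hd1 x hx').sub (hlog.const_mul δ)
      refine this.congr_deriv ?_
      field_simp
      ring
    apply antitoneOn_of_deriv_nonpos (convex_Icc _ _)
    · apply ContinuousOn.sub
      · exact hφcont.mono hsub
      · apply continuousOn_const.mul
        apply ContinuousOn.log
        · exact (continuousOn_const.sub continuousOn_id)
        · intro x hx
          have := (hsub hx).2
          simp only [ne_eq]
          intro hc
          rw [sub_eq_zero] at hc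
          linarith [hx.2, hu₁mem.2]
    · intro x hx
      rw [interior_Icc] at hx
      exact ((hgd x hx).differentiableAt).differentiableWithinAt
    · intro x hx
      rw [interior_Icc] at hx
      have hx' : x ∈ Ioo (0:ℝ) 1 := hsub ⟨le_of_lt hx.1, le_of_lt hx.2⟩
      rw [(hgd x hx).deriv]
      have h1x : (0:ℝ) < 1 - x := by linarith [hx'.2]
      have hxpos : (0:ℝ) < x := hx'.1
      have hWx : δ ≤ β * (1 - 2*x) * φ x - x * (1-x) * deriv φ x :=
        hWge x ⟨le_of_lt hx.1, le_of_lt hx.2⟩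
      have hφx : 0 < φ x := hcon x hx'
      have hkey : x * (1-x) * deriv φ x ≤ -δ := by
        have h12 : 1 - 2*x < 0 := by linarith [hx.1]
        nlinarith [mul_pos hβpos hφx]
      have hφ'neg : deriv φ x < 0 := by
        nlinarith [mul_pos hxpos h1x]
      have hnum : deriv φ x * (1-x) + δ ≤ 0 := by
        nlinarith [sq_nonneg (1-x)]
      have : deriv φ x + δ/(1-x) = (deriv φ x * (1-x) + δ)/(1-x) := by
        field_simp
      rw [this]
      exact div_nonpos_of_nonpos_of_nonneg hnum (le_of_lt h1x)
  -- conclude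
  have hfinal := hganti (show (3/4:ℝ) ∈ Icc (3/4:ℝ) u₁ by
      exact ⟨le_refl _, le_of_lt h34u₁⟩)
    (show u₁ ∈ Icc (3/4:ℝ) u₁ by exact ⟨le_of_lt h34u₁, le_refl _⟩)
    (le_of_lt h34u₁)
  simp only [hg] at hfinal
  have hlogu₁ : Real.log (1 - u₁) = -M := by
    simp only [hu₁]
    rw [show (1:ℝ) - (1 - Real.exp (-M)) = Real.exp (-M) by ring, Real.log_exp]
  rw [hlogu₁] at hfinal
  have hMbig : φ (3/4) - δ * Real.log (1/4) + 1 ≤ δ * M := by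
    have : (φ (3/4) - δ * Real.log (1/4) + 1)/δ ≤ M := le_max_right _ _
    calc φ (3/4) - δ * Real.log (1/4) + 1
        = δ * ((φ (3/4) - δ * Real.log (1/4) + 1)/δ) := by field_simp
      _ ≤ δ * M := by exact mul_le_mul_of_nonneg_left this (le_of_lt hδ)
    
  have hφu₁ : φ u₁ ≤ -1 := by
    have : φ u₁ - δ * (-M) ≤ φ (3/4) - δ * Real.log (1 - 3/4) := hfinal
    have h14 : Real.log (1 - 3/4) = Real.log (1/4) := by norm_num
    rw [h14] at this
    linarith
  have := hcon u₁ hu₁mem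
  linarith
end

section
/- Fix κ∈(0,8) and α ≤ 1−κ/8. Let φ_α be the unique C² solution on (0,1) of u(1−u)φ'' − ((3κ−8)/(2κ))(2u−1)φ' + (8α/κ)φ = 0 with φ(1/2)=1, φ'(1/2)=0. Then φ_α(u) > 0 for all u∈(0,1); in fact φ_α(u) ≥ (4u(1−u))^{4/κ−1/2} for all u∈(0,1). -/
open Real Set

namespace EulerHG

noncomputable def pe (κ : ℝ) : ℝ := 4 / κ - 1 / 2
noncomputable def ce (κ : ℝ) : ℝ := (3 * κ - 8) / (2 * κ)
noncomputable def ψ (κ u : ℝ) : ℝ := (4 * u * (1 - u)) ^ pe κ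
noncomputable def ψ₁ (κ u : ℝ) : ℝ := (4 - 8 * u) * pe κ * (4 * u * (1 - u)) ^ (pe κ - 1)
noncomputable def ψ₂ (κ u : ℝ) : ℝ :=
  -(8 * 1) * pe κ * (4 * u * (1 - u)) ^ (pe κ - 1)
    + (4 - 8 * u) * pe κ * ((4 - 8 * u) * (pe κ - 1) * (4 * u * (1 - u)) ^ (pe κ - 1 - 1))
noncomputable def Wr (κ : ℝ) (φ : ℝ → ℝ) (u : ℝ) : ℝ := ψ κ u * deriv φ u - φ u * ψ₁ κ u
noncomputable def Vf (κ : ℝ) (φ : ℝ → ℝ) (u : ℝ) : ℝ := Wr κ φ u * (u * (1 - u)) ^ ce κ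

lemma x_pos {u : ℝ} (hu : u ∈ Ioo (0:ℝ) 1) : 0 < 4 * u * (1 - u) := by
  nlinarith [hu.1, hu.2]

lemma y_pos {u : ℝ} (hu : u ∈ Ioo (0:ℝ) 1) : 0 < u * (1 - u) := by
  nlinarith [hu.1, hu.2]

lemma base_deriv (u : ℝ) : HasDerivAt (fun v : ℝ => 4 * v * (1 - v)) (4 - 8 * u) u := by
  have h : HasDerivAt (fun v : ℝ => 4 * v * (1 - v)) (4 * 1 * (1 - u) + 4 * u * (0 - 1)) u :=
    ((hasDerivAt_id u).const_mul 4).mul ((hasDerivAt_const u 1).sub (hasDerivAt_id u))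
  convert h using 1; ring

lemma psi_deriv {κ u : ℝ} (hu : u ∈ Ioo (0:ℝ) 1) : HasDerivAt (ψ κ) (ψ₁ κ u) u :=
  (base_deriv u).rpow_const (Or.inl (x_pos hu).ne')

lemma base2_deriv (u : ℝ) {κ : ℝ} :
    HasDerivAt (fun v : ℝ => (4 - 8 * v) * pe κ) (-(8 * 1) * pe κ) u :=
  (((hasDerivAt_id u).const_mul 8).const_sub 4).mul_const (pe κ)

lemma psi1_deriv {κ u : ℝ} (hu : u ∈ Ioo (0:ℝ) 1) : HasDerivAt (ψ₁ κ) (ψ₂ κ u) u := by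
  have h2 : HasDerivAt (fun v : ℝ => (4 * v * (1 - v)) ^ (pe κ - 1))
      ((4 - 8 * u) * (pe κ - 1) * (4 * u * (1 - u)) ^ (pe κ - 1 - 1)) u :=
    (base_deriv u).rpow_const (Or.inl (x_pos hu).ne')
  exact (base2_deriv u).mul h2

lemma psi_ode {κ u : ℝ} (hκ : 0 < κ) (hu : u ∈ Ioo (0:ℝ) 1) :
    u * (1 - u) * ψ₂ κ u - (3 * κ - 8) / (2 * κ) * (2 * u - 1) * ψ₁ κ u
      + 8 * (1 - κ / 8) / κ * ψ κ u = 0 := by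
  have hx := (x_pos hu).ne'
  have e1 : (4 * u * (1 - u) : ℝ) ^ (pe κ - 1)
      = (4 * u * (1 - u)) ^ (pe κ - 1 - 1) * (4 * u * (1 - u)) := by
    conv_lhs => rw [show pe κ - 1 = (pe κ - 1 - 1) + 1 by ring]
    rw [Real.rpow_add_one hx]
  have e2 : (4 * u * (1 - u) : ℝ) ^ pe κ
      = (4 * u * (1 - u)) ^ (pe κ - 1 - 1) * ((4 * u * (1 - u)) * (4 * u * (1 - u))) := by
    conv_lhs => rw [show pe κ = (pe κ - 1 - 1) + 1 + 1 by ring]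
    rw [Real.rpow_add_one hx, Real.rpow_add_one hx]; ring
  simp only [ψ, ψ₁, ψ₂]
  rw [e1, e2]
  simp only [pe]
  have hκ' : κ ≠ 0 := hκ.ne'
  field_simp
  ring

lemma psi_pos {κ u : ℝ} (hu : u ∈ Ioo (0:ℝ) 1) : 0 < ψ κ u :=
  Real.rpow_pos_of_pos (x_pos hu) _

lemma psi_half {κ : ℝ} : ψ κ (1/2) = 1 := by
  simp only [ψ]; norm_num

lemma psi1_half {κ : ℝ} : ψ₁ κ (1/2) = 0 := by
  simp only [ψ₁]; norm_num

lemma ybase_deriv (u : ℝ) : HasDerivAt (fun v : ℝ => v * (1 - v)) (1 - 2 * u) u := by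
  have h : HasDerivAt (fun v : ℝ => v * (1 - v)) (1 * (1 - u) + u * (0 - 1)) u :=
    (hasDerivAt_id u).mul ((hasDerivAt_const u 1).sub (hasDerivAt_id u))
  convert h using 1; ring

lemma V_deriv {κ α : ℝ} (hκ : 0 < κ) {φ : ℝ → ℝ} {u : ℝ} (hu : u ∈ Ioo (0:ℝ) 1)
    (hφ' : HasDerivAt φ (deriv φ u) u)
    (hφ'' : HasDerivAt (deriv φ) (deriv (deriv φ) u) u)
    (hode : u * (1 - u) * deriv (deriv φ) u - (3 * κ - 8) / (2 * κ) * (2 * u - 1) * deriv φ u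
        + 8 * α / κ * φ u = 0) :
    HasDerivAt (Vf κ φ)
      (8 / κ * ((1 - κ / 8) - α) * φ u * ψ κ u * (u * (1 - u)) ^ (ce κ - 1)) u := by
  have hW : HasDerivAt (Wr κ φ) (ψ κ u * deriv (deriv φ) u - φ u * ψ₂ κ u) u := by
    have h := ((psi_deriv (κ := κ) hu).mul hφ'').sub (hφ'.mul (psi1_deriv (κ := κ) hu))
    refine h.congr_deriv ?_; ring
  have hm : HasDerivAt (fun v : ℝ => (v * (1 - v)) ^ ce κ)
      ((1 - 2 * u) * ce κ * (u * (1 - u)) ^ (ce κ - 1)) u :=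
    (ybase_deriv u).rpow_const (Or.inl (y_pos hu).ne')
  have h := hW.mul hm
  refine h.congr_deriv ?_
  symm
  have em : (u * (1 - u) : ℝ) ^ ce κ = (u * (1 - u)) ^ (ce κ - 1) * (u * (1 - u)) := by
    conv_lhs => rw [show ce κ = (ce κ - 1) + 1 by ring]
    rw [Real.rpow_add_one (y_pos hu).ne']
  rw [em]
  have hode2 := psi_ode hκ hu
  simp only [Wr, ce]
  linear_combination (-((u * (1 - u)) ^ ((3 * κ - 8) / (2 * κ) - 1) * ψ κ u)) * hode
    + ((u * (1 - u)) ^ ((3 * κ - 8) / (2 * κ) - 1) * φ u) * hode2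

lemma V_half {κ : ℝ} {φ : ℝ → ℝ} (h1 : φ (1/2) = 1) (h2 : deriv φ (1/2) = 0) :
    Vf κ φ (1/2) = 0 := by
  simp only [Vf, Wr]
  rw [psi_half, psi1_half, h1, h2]
  ring

theorem key (κ α : ℝ) (hκ : 0 < κ) (hκ8 : κ < 8) (hα : α ≤ 1 - κ / 8)
    (φ : ℝ → ℝ)
    (hC : ContDiffOn ℝ 2 φ (Ioo (0 : ℝ) 1))
    (hode : ∀ u ∈ Ioo (0 : ℝ) 1,
      u * (1 - u) * deriv (deriv φ) u - (3 * κ - 8) / (2 * κ) * (2 * u - 1) * deriv φ u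
        + 8 * α / κ * φ u = 0)
    (h1 : φ (1 / 2) = 1) (h2 : deriv φ (1 / 2) = 0) :
    ∀ t ∈ Ico (1/2 : ℝ) 1, ψ κ t ≤ φ t := by
  have hφd : ∀ v ∈ Ioo (0:ℝ) 1, HasDerivAt φ (deriv φ v) v := by
    intro v hv
    exact (((hC v hv).contDiffAt (isOpen_Ioo.mem_nhds hv)).differentiableAt
      (by norm_num)).hasDerivAt
  have hC' : ContDiffOn ℝ 1 (deriv φ) (Ioo (0:ℝ) 1) :=
    hC.deriv_of_isOpen isOpen_Ioo (by norm_num)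
  have hφdd : ∀ v ∈ Ioo (0:ℝ) 1, HasDerivAt (deriv φ) (deriv (deriv φ) v) v := fun v hv =>
    (((hC' v hv).contDiffAt (isOpen_Ioo.mem_nhds hv)).differentiableAt (by norm_num)).hasDerivAt
  have hVd : ∀ v ∈ Ioo (0:ℝ) 1, HasDerivAt (Vf κ φ)
      (8/κ * ((1-κ/8) - α) * φ v * ψ κ v * (v*(1-v)) ^ (ce κ - 1)) v :=
    fun v hv => V_deriv hκ hv (hφd v hv) (hφdd v hv) (hode v hv)
  by_contra hcon
  push_neg at hcon
  obtain ⟨b₀, hb₀I, hb₀⟩ := hcon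
  set B := {t : ℝ | t ∈ Ico (1/2:ℝ) 1 ∧ φ t < ψ κ t} with hB
  have hBne : B.Nonempty := ⟨b₀, hb₀I, hb₀⟩
  have hBbd : BddBelow B := ⟨1/2, fun t ht => ht.1.1⟩
  set u₁ := sInf B with hu₁
  have h12le : (1/2:ℝ) ≤ u₁ := le_csInf hBne fun t ht => ht.1.1
  have hu₁lt1 : u₁ < 1 := lt_of_le_of_lt (csInf_le hBbd ⟨hb₀I, hb₀⟩) hb₀I.2
  have hu₁mem : u₁ ∈ Ioo (0:ℝ) 1 := ⟨by linarith, hu₁lt1⟩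
  have hleft : ∀ s, 1/2 ≤ s → s < u₁ → ψ κ s ≤ φ s := by
    intro s hs1 hs2
    by_contra h
    have hsB : s ∈ B := ⟨⟨hs1, by linarith⟩, not_le.mp h⟩
    exact absurd (csInf_le hBbd hsB) (not_le.mpr hs2)
  have hφu₁pos : 0 < φ u₁ := by
    rcases eq_or_lt_of_le h12le with heq | hlt
    · rw [← heq, h1]; norm_num
    · have hlim : Filter.Tendsto (fun s => φ s - ψ κ s) (nhdsWithin u₁ (Iio u₁))
          (nhds (φ u₁ - ψ κ u₁)) := by
        have hcφ : ContinuousAt φ u₁ := (hφd u₁ hu₁mem).continuousAt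
        have hcψ : ContinuousAt (ψ κ) u₁ := (psi_deriv (κ:=κ) hu₁mem).continuousAt
        exact ((hcφ.sub hcψ).tendsto).mono_left nhdsWithin_le_nhds
      have hev : ∀ᶠ s in nhdsWithin u₁ (Iio u₁), 0 ≤ φ s - ψ κ s := by
        filter_upwards [Ioo_mem_nhdsLT_of_mem
          (⟨hlt, le_refl u₁⟩ : u₁ ∈ Ioc (1/2:ℝ) u₁)] with s hs
        have := hleft s hs.1.le hs.2; linarith
      have h0 : 0 ≤ φ u₁ - ψ κ u₁ := ge_of_tendsto hlim hev
      have := psi_pos (κ:=κ) hu₁mem; linarith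
  have hcont : ContinuousAt φ u₁ := (hφd u₁ hu₁mem).continuousAt
  have hev : ∀ᶠ s in nhds u₁, 0 < φ s := hcont.eventually (eventually_gt_nhds hφu₁pos)
  obtain ⟨ε, hε, hball⟩ := Metric.eventually_nhds_iff.mp hev
  set δ := min (ε/2) ((1 - u₁)/2) with hδdef
  have hδpos : 0 < δ := lt_min (by linarith) (by linarith)
  have hδ1 : u₁ + δ < 1 := by
    have := min_le_right (ε/2) ((1-u₁)/2); simp only [← hδdef] at this; linarith
  have hsub : Icc (1/2:ℝ) (u₁+δ) ⊆ Ioo (0:ℝ) 1 := fun s hs =>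
    ⟨by linarith [hs.1], by linarith [hs.2]⟩
  have hφpos : ∀ s ∈ Icc (1/2:ℝ) (u₁+δ), 0 < φ s := by
    intro s hs
    rcases le_or_gt s u₁ with h | h
    · rcases eq_or_lt_of_le h with he | hl
      · rw [he]; exact hφu₁pos
      · have h1' := hleft s hs.1 hl
        have h2' := psi_pos (κ:=κ) (hsub hs); linarith
    · apply hball
      rw [Real.dist_eq, abs_of_pos (by linarith)]
      have h3' : s - u₁ ≤ δ := by linarith [hs.2]
      have := min_le_left (ε/2) ((1-u₁)/2); simp only [← hδdef] at this; linarith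
  have hVmono : MonotoneOn (Vf κ φ) (Icc (1/2) (u₁+δ)) := by
    apply monotoneOn_of_deriv_nonneg (convex_Icc _ _)
    · intro s hs; exact (hVd s (hsub hs)).continuousAt.continuousWithinAt
    · intro s hs
      rw [interior_Icc] at hs
      exact (hVd s (hsub (Ioo_subset_Icc_self hs))).differentiableAt.differentiableWithinAt
    · intro s hs
      rw [interior_Icc] at hs
      have hs' := hsub (Ioo_subset_Icc_self hs)
      rw [(hVd s hs').deriv]
      have h8 : (0:ℝ) < 8/κ := by positivity
      have hαn : 0 ≤ (1-κ/8) - α := by linarith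
      have hφp := hφpos s (Ioo_subset_Icc_self hs)
      have hψp := psi_pos (κ:=κ) hs'
      have hrp := Real.rpow_pos_of_pos (y_pos hs') (ce κ - 1)
      positivity
  have hV0 : ∀ s ∈ Icc (1/2:ℝ) (u₁+δ), 0 ≤ Vf κ φ s := by
    intro s hs
    have hmem12 : (1/2:ℝ) ∈ Icc (1/2:ℝ) (u₁+δ) := ⟨le_refl _, by linarith⟩
    have hm := hVmono hmem12 hs hs.1
    rwa [V_half h1 h2] at hm
  have hW0 : ∀ s ∈ Icc (1/2:ℝ) (u₁+δ), 0 ≤ Wr κ φ s := by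
    intro s hs
    have hm := Real.rpow_pos_of_pos (y_pos (hsub hs)) (ce κ)
    have hv := hV0 s hs
    simp only [Vf] at hv
    nlinarith
  have hg : ∀ s ∈ Icc (1/2:ℝ) (u₁+δ),
      HasDerivAt (fun v => φ v / ψ κ v) (Wr κ φ s / (ψ κ s)^2) s := by
    intro s hs
    have hs' := hsub hs
    have h := (hφd s hs').div (psi_deriv (κ:=κ) hs') (psi_pos hs').ne'
    refine h.congr_deriv ?_
    simp only [Wr]; ring
  have hgmono : MonotoneOn (fun v => φ v / ψ κ v) (Icc (1/2) (u₁+δ)) := by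
    apply monotoneOn_of_deriv_nonneg (convex_Icc _ _)
    · intro s hs; exact (hg s hs).continuousAt.continuousWithinAt
    · intro s hs; rw [interior_Icc] at hs
      exact (hg s (Ioo_subset_Icc_self hs)).differentiableAt.differentiableWithinAt
    · intro s hs; rw [interior_Icc] at hs
      have hs' := Ioo_subset_Icc_self hs
      rw [(hg s hs').deriv]
      exact div_nonneg (hW0 s hs') (sq_nonneg _)
  have hfinal : ∀ s ∈ Icc (1/2:ℝ) (u₁+δ), ψ κ s ≤ φ s := by
    intro s hs
    have hmem12 : (1/2:ℝ) ∈ Icc (1/2:ℝ) (u₁+δ) := ⟨le_refl _, by linarith⟩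
    have hmono := hgmono hmem12 hs hs.1
    simp only at hmono
    have hone : φ (1/2) / ψ κ (1/2) = 1 := by rw [h1, psi_half]; norm_num
    rw [hone] at hmono
    have hψp := psi_pos (κ:=κ) (hsub hs)
    rw [le_div_iff₀ hψp] at hmono
    linarith
  obtain ⟨b, hbB, hblt⟩ := (csInf_lt_iff hBbd hBne).mp
    (show sInf B < u₁ + δ by rw [← hu₁]; linarith)
  have hb1 : (1/2:ℝ) ≤ b := hbB.1.1
  have := hfinal b ⟨hb1, hblt.le⟩
  exact absurd this (not_le.mpr hbB.2)

end EulerHG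

/-- for `α ≤ 1 - κ/8`, the solution of Euler's hypergeometric IVP
is positive on `(0,1)`, and indeed bounded below by the critical solution. -/
theorem Euler_hypergeometric_subcritical_positive (κ α : ℝ)
    (hκ : 0 < κ) (hκ8 : κ < 8) (hα : α ≤ 1 - κ / 8)
    (φ : ℝ → ℝ)
    (hC : ContDiffOn ℝ 2 φ (Ioo (0 : ℝ) 1))
    (hode : ∀ u ∈ Ioo (0 : ℝ) 1,
      u * (1 - u) * deriv (deriv φ) u - (3 * κ - 8) / (2 * κ) * (2 * u - 1) * deriv φ u
        + 8 * α / κ * φ u = 0)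
    (h1 : φ (1 / 2) = 1) (h2 : deriv φ (1 / 2) = 0) :
    (∀ u ∈ Ioo (0 : ℝ) 1, 0 < φ u) ∧
      ∀ u ∈ Ioo (0 : ℝ) 1, (4 * u * (1 - u)) ^ (4 / κ - 1 / 2) ≤ φ u := by
  have keyR := EulerHG.key κ α hκ hκ8 hα φ hC hode h1 h2
  set φr : ℝ → ℝ := fun u => φ (1 - u) with hφr
  have hmem : ∀ u ∈ Ioo (0:ℝ) 1, (1-u) ∈ Ioo (0:ℝ) 1 := fun u hu =>
    ⟨by linarith [hu.2], by linarith [hu.1]⟩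
  have hmaps : MapsTo (fun u : ℝ => 1 - u) (Ioo (0:ℝ) 1) (Ioo (0:ℝ) 1) := fun u hu => hmem u hu
  have hCr : ContDiffOn ℝ 2 φr (Ioo (0:ℝ) 1) :=
    hC.comp ((contDiff_const.sub contDiff_id).contDiffOn) hmaps
  have hφd : ∀ v ∈ Ioo (0:ℝ) 1, HasDerivAt φ (deriv φ v) v := by
    intro v hv
    exact (((hC v hv).contDiffAt (isOpen_Ioo.mem_nhds hv)).differentiableAt
      (by norm_num)).hasDerivAt
  have hC' : ContDiffOn ℝ 1 (deriv φ) (Ioo (0:ℝ) 1) :=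
    hC.deriv_of_isOpen isOpen_Ioo (by norm_num)
  have hφdd : ∀ v ∈ Ioo (0:ℝ) 1, HasDerivAt (deriv φ) (deriv (deriv φ) v) v := fun v hv =>
    (((hC' v hv).contDiffAt (isOpen_Ioo.mem_nhds hv)).differentiableAt (by norm_num)).hasDerivAt
  have hlin : ∀ u : ℝ, HasDerivAt (fun v : ℝ => 1 - v) (-1) u := fun u =>
    (hasDerivAt_id u).const_sub 1
  have hd1 : ∀ u ∈ Ioo (0:ℝ) 1, HasDerivAt φr (-(deriv φ (1-u))) u := by
    intro u hu
    have h : HasDerivAt φr (deriv φ (1-u) * (-1)) u :=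
      (hφd (1-u) (hmem u hu)).comp u (hlin u)
    convert h using 1; ring
  have hder_eq : ∀ u ∈ Ioo (0:ℝ) 1, deriv φr u = -(deriv φ (1-u)) := fun u hu => (hd1 u hu).deriv
  have hd2 : ∀ u ∈ Ioo (0:ℝ) 1, HasDerivAt (deriv φr) (deriv (deriv φ) (1-u)) u := by
    intro u hu
    have heq : deriv φr =ᶠ[nhds u] fun v => -(deriv φ (1-v)) :=
      Filter.eventuallyEq_of_mem (isOpen_Ioo.mem_nhds hu) (fun v hv => hder_eq v hv)
    have hdd : HasDerivAt (fun v => -(deriv φ (1-v))) (deriv (deriv φ) (1-u)) u := by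
      have h : HasDerivAt (fun v : ℝ => -((deriv φ) ((fun w : ℝ => 1 - w) v)))
          (-(deriv (deriv φ) (1-u) * (-1))) u :=
        ((hφdd (1-u) (hmem u hu)).comp u (hlin u)).neg
      convert h using 1; ring
    exact hdd.congr_of_eventuallyEq heq
  have hoder : ∀ u ∈ Ioo (0:ℝ) 1,
      u * (1-u) * deriv (deriv φr) u - (3*κ-8)/(2*κ) * (2*u-1) * deriv φr u
        + 8*α/κ * φr u = 0 := by
    intro u hu
    rw [(hd2 u hu).deriv, hder_eq u hu]
    have h := hode (1-u) (hmem u hu)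
    simp only [hφr]
    linear_combination h
  have h1r : φr (1/2) = 1 := by
    simp only [hφr]; norm_num [h1]
  have h2r : deriv φr (1/2) = 0 := by
    rw [hder_eq (1/2) (by norm_num)]
    norm_num
    exact h2
  have keyL := EulerHG.key κ α hκ hκ8 hα φr hCr hoder h1r h2r
  have hboth : ∀ u ∈ Ioo (0:ℝ) 1, EulerHG.ψ κ u ≤ φ u := by
    intro u hu
    rcases le_or_gt (1/2 : ℝ) u with h | h
    · exact keyR u ⟨h, hu.2⟩
    · have ht : (1-u) ∈ Ico (1/2:ℝ) 1 := ⟨by linarith, by linarith [hu.1]⟩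
      have hL := keyL (1-u) ht
      simp only [hφr] at hL
      rw [show (1:ℝ) - (1-u) = u by ring] at hL
      have hbase : (4*(1-u)*(1-(1-u)) : ℝ) = 4*u*(1-u) := by ring
      simp only [EulerHG.ψ] at hL ⊢
      rw [hbase] at hL
      exact hL
  constructor
  · intro u hu
    exact lt_of_lt_of_le (EulerHG.psi_pos hu) (hboth u hu)
  · intro u hu
    have := hboth u hu
    simpa only [EulerHG.ψ, EulerHG.pe] using this
end

section
/- Fix κ∈(0,8) and suppose f : (1/2, 1) → ℝ is twice differentiable, f ≥ 0 on (1/2,1), and satisfies u(1−u)f''(u) − ((κ+8)/(2κ))(2u−1)f'(u) + (8(α−α₀)/κ)f(u) = 0 with α > α₀ := 1−κ/8. If f'(1/2+ε) = −δ < 0 for some ε>0, then for all u∈(1/2+ε, 1): f'(u) ≤ −δ·(u(1−u)/(1/4−ε²))^{−(κ+8)/(2κ)}. Consequently f' is not integrable near 1 and f(u) → −∞ as u→1, a contradiction; hence no such nonnegative f exists. -/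
open Real Set

set_option maxHeartbeats 1000000

/-- Grönwall-type bound on `f'` for a nonnegative solution of the
transformed Euler hypergeometric ODE with `α > α₀ := 1 - κ/8`, and the resulting
contradiction: no such nonnegative `f` exists. -/
theorem no_nonneg_solution_supercritical (κ α ε δ : ℝ)
    (hκ : 0 < κ) (hκ8 : κ < 8) (hα : 1 - κ / 8 < α)
    (hε : 0 < ε) (hε1 : 1 / 2 + ε < 1) (hδ : 0 < δ)
    (f : ℝ → ℝ)
    (hf : ∀ u ∈ Ioo (1 / 2 : ℝ) 1, DifferentiableAt ℝ f u ∧ DifferentiableAt ℝ (deriv f) u)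
    (hnonneg : ∀ u ∈ Ioo (1 / 2 : ℝ) 1, 0 ≤ f u)
    (hode : ∀ u ∈ Ioo (1 / 2 : ℝ) 1,
      u * (1 - u) * deriv (deriv f) u - (κ + 8) / (2 * κ) * (2 * u - 1) * deriv f u
        + 8 * (α - (1 - κ / 8)) / κ * f u = 0)
    (hd : deriv f (1 / 2 + ε) = -δ) :
    (∀ u ∈ Ioo (1 / 2 + ε) 1,
      deriv f u ≤ -δ * (u * (1 - u) / (1 / 4 - ε ^ 2)) ^ (-((κ + 8) / (2 * κ)))) ∧ False := by
  set c : ℝ := (κ + 8) / (2 * κ) with hcdef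
  have hκ2 : (0:ℝ) < 2 * κ := by linarith
  have hc1 : 1 < c := by
    rw [hcdef, lt_div_iff₀ hκ2]; linarith
  have hc0 : 0 < c := by linarith
  set K : ℝ := 8 * (α - (1 - κ / 8)) / κ with hKdef
  have hK : 0 < K := by
    rw [hKdef]; exact div_pos (by linarith) hκ
  have hε2 : ε < 1 / 2 := by linarith
  have hA : (0:ℝ) < 1 / 4 - ε ^ 2 := by nlinarith
  set A : ℝ := 1 / 4 - ε ^ 2 with hAdef
  set u₀ : ℝ := 1 / 2 + ε with hu₀def
  have hu₀mem : u₀ ∈ Ioo (1/2 : ℝ) 1 := ⟨by rw [hu₀def]; linarith, hε1⟩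
  -- h is the Grönwall integrating-factor function
  set h : ℝ → ℝ := fun x => deriv f x * (x * (1 - x)) ^ c with hhdef
  have hPpos : ∀ u ∈ Ioo (1/2 : ℝ) 1, 0 < u * (1 - u) := by
    rintro u ⟨h1, h2⟩; nlinarith
  have key : ∀ u ∈ Ioo (1/2 : ℝ) 1,
      HasDerivAt h (-((u * (1 - u)) ^ (c - 1) * (K * f u))) u := by
    intro u hu
    have hP := hPpos u hu
    have hp : HasDerivAt (fun x : ℝ => x * (1 - x)) (1 - 2 * u) u := by
      have := (hasDerivAt_id u).mul ((hasDerivAt_const u (1:ℝ)).sub (hasDerivAt_id u))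
      refine HasDerivAt.congr_deriv this ?_
      show 1 * (1 - u) + u * (0 - 1) = 1 - 2 * u; ring
    have hq : HasDerivAt (fun x : ℝ => (x * (1 - x)) ^ c)
        ((1 - 2 * u) * c * (u * (1 - u)) ^ (c - 1)) u :=
      hp.rpow_const (Or.inl hP.ne')
    have hh : HasDerivAt h
        (deriv (deriv f) u * (u * (1 - u)) ^ c
          + deriv f u * ((1 - 2 * u) * c * (u * (1 - u)) ^ (c - 1))) u :=
      ((hf u hu).2.hasDerivAt).mul hq
    have hsplit : (u * (1 - u)) ^ c = (u * (1 - u)) ^ (c - 1) * (u * (1 - u)) := by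
      nth_rewrite 1 [show c = c - 1 + 1 by ring]
      rw [Real.rpow_add_one hP.ne']
    have hodeu := hode u hu
    have heq : deriv (deriv f) u * (u * (1 - u)) ^ c
        + deriv f u * ((1 - 2 * u) * c * (u * (1 - u)) ^ (c - 1))
        = -((u * (1 - u)) ^ (c - 1) * (K * f u)) := by
      rw [hsplit]
      linear_combination (u * (1 - u)) ^ (c - 1) * hodeu
    rw [heq] at hh
    exact hh
  have hanti : AntitoneOn h (Ioo (1/2 : ℝ) 1) := by
    apply antitoneOn_of_deriv_nonpos (convex_Ioo _ _)
    · intro u hu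
      exact ((key u hu).differentiableAt).continuousAt.continuousWithinAt
    · rw [interior_Ioo]
      intro u hu
      exact ((key u hu).differentiableAt).differentiableWithinAt
    · rw [interior_Ioo]
      intro u hu
      rw [(key u hu).deriv]
      have h1 : 0 ≤ (u * (1 - u)) ^ (c - 1) := Real.rpow_nonneg (hPpos u hu).le _
      have h2 : 0 ≤ f u := hnonneg u hu
      have : 0 ≤ (u * (1 - u)) ^ (c - 1) * (K * f u) := by positivity
      linarith
  have hu₀A : u₀ * (1 - u₀) = A := by rw [hu₀def, hAdef]; ring
  have hhu₀ : h u₀ = -δ * A ^ c := by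
    show deriv f u₀ * (u₀ * (1 - u₀)) ^ c = -δ * A ^ c
    rw [hu₀A, hd]
  have bound1 : ∀ u ∈ Ioo u₀ 1, deriv f u * (u * (1 - u)) ^ c ≤ -δ * A ^ c := by
    intro u hu
    have humem : u ∈ Ioo (1/2 : ℝ) 1 := ⟨lt_trans hu₀mem.1 hu.1, hu.2⟩
    have := hanti hu₀mem humem hu.1.le
    rw [hhu₀] at this
    exact this
  have bound2 : ∀ u ∈ Ioo u₀ 1,
      deriv f u ≤ -δ * (u * (1 - u) / A) ^ (-c) := by
    intro u hu
    have humem : u ∈ Ioo (1/2 : ℝ) 1 := ⟨lt_trans hu₀mem.1 hu.1, hu.2⟩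
    have hP := hPpos u humem
    have hPc : 0 < (u * (1 - u)) ^ c := Real.rpow_pos_of_pos hP _
    have e1 : (u * (1 - u) / A) ^ (-c) = A ^ c / (u * (1 - u)) ^ c := by
      rw [Real.rpow_neg (by positivity), Real.div_rpow hP.le hA.le, inv_div]
    calc deriv f u ≤ (-δ * A ^ c) / (u * (1 - u)) ^ c :=
          (le_div_iff₀ hPc).mpr (bound1 u hu)
      _ = -δ * (u * (1 - u) / A) ^ (-c) := by rw [e1]; ring
  set C : ℝ := δ * A ^ c with hCdef
  have hC : 0 < C := by rw [hCdef]; positivity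
  have bound3 : ∀ u ∈ Ioo u₀ 1, deriv f u ≤ -C / (1 - u) := by
    intro u hu
    have humem : u ∈ Ioo (1/2 : ℝ) 1 := ⟨lt_trans hu₀mem.1 hu.1, hu.2⟩
    have hP := hPpos u humem
    have hPc : 0 < (u * (1 - u)) ^ c := Real.rpow_pos_of_pos hP _
    have h1u : 0 < 1 - u := by have := hu.2; linarith
    have h1u1 : 1 - u < 1 := by have := humem.1; linarith
    have hPle : (u * (1 - u)) ^ c ≤ 1 - u := by
      calc (u * (1 - u)) ^ c ≤ (1 - u) ^ c := by
            apply Real.rpow_le_rpow hP.le _ hc0.le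
            nlinarith [humem.2]
        _ ≤ (1 - u) ^ (1:ℝ) := Real.rpow_le_rpow_of_exponent_ge h1u h1u1.le hc1.le
        _ = 1 - u := Real.rpow_one _
    have e1 : (u * (1 - u) / A) ^ (-c) = A ^ c / (u * (1 - u)) ^ c := by
      rw [Real.rpow_neg (by positivity), Real.div_rpow hP.le hA.le, inv_div]
    have step : -δ * (u * (1 - u) / A) ^ (-c) ≤ -C / (1 - u) := by
      rw [e1, hCdef]
      rw [show -δ * (A ^ c / (u * (1 - u)) ^ c) = (-(δ * A ^ c)) / (u * (1 - u)) ^ c by ring]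
      rw [show -(δ * A ^ c) / (1 - u) = (-(δ * A ^ c)) / (1 - u) by ring]
      rw [div_le_div_iff₀ hPc h1u]
      have hneg : -(δ * A ^ c) ≤ 0 := by
        have := Real.rpow_nonneg hA.le c
        nlinarith
      nlinarith
    exact le_trans (bound2 u hu) step
  constructor
  · intro u hu
    exact bound2 u hu
  -- Now the contradiction
  set G : ℝ → ℝ := fun x => f x - C * Real.log (1 - x) with hGdef
  have keyG : ∀ u ∈ Ioo (1/2 : ℝ) 1,
      HasDerivAt G (deriv f u - C * ((0 - 1) / (1 - u))) u := by
    intro u hu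
    have h1u : (1 : ℝ) - u ≠ 0 := by have := hu.2; intro h'; linarith [sub_eq_zero.mp h']
    have hlog : HasDerivAt (fun x : ℝ => Real.log (1 - x)) ((0 - 1) / (1 - u)) u :=
      (((hasDerivAt_const u (1:ℝ)).sub (hasDerivAt_id u))).log h1u
    exact ((hf u hu).1.hasDerivAt).sub (hlog.const_mul C)
  have hantiG : AntitoneOn G (Ico u₀ 1) := by
    have hsub : Ico u₀ 1 ⊆ Ioo (1/2 : ℝ) 1 := by
      rintro x ⟨h1, h2⟩
      exact ⟨lt_of_lt_of_le hu₀mem.1 h1, h2⟩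
    apply antitoneOn_of_deriv_nonpos (convex_Ico _ _)
    · intro u hu
      exact ((keyG u (hsub hu)).differentiableAt).continuousAt.continuousWithinAt
    · rw [interior_Ico]
      intro u hu
      exact ((keyG u (hsub ⟨hu.1.le, hu.2⟩)).differentiableAt).differentiableWithinAt
    · rw [interior_Ico]
      intro u hu
      have humem : u ∈ Ioo (1/2 : ℝ) 1 := ⟨lt_trans hu₀mem.1 hu.1, hu.2⟩
      rw [(keyG u humem).deriv]
      have h1u : 0 < 1 - u := by have := hu.2; linarith
      have e : C * ((0 - 1) / (1 - u)) = -(C / (1 - u)) := by ring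
      have := bound3 u ⟨hu.1, hu.2⟩
      rw [e]
      have : deriv f u ≤ -C / (1 - u) := this
      have e2 : -C / (1 - u) = -(C / (1 - u)) := by ring
      linarith [e2 ▸ this]
  set B : ℝ := G u₀ with hBdef
  set r : ℝ := min ((1 / 2 - ε) / 2) (Real.exp (-B / C) / 2) with hrdef
  have hr0 : 0 < r := lt_min (by linarith) (by positivity)
  set t : ℝ := 1 - r with htdef
  have hru₀ : r < 1 - u₀ := by
    calc r ≤ (1 / 2 - ε) / 2 := min_le_left _ _
      _ < 1 / 2 - ε := by linarith
      _ = 1 - u₀ := by rw [hu₀def]; ring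
  have htmem : t ∈ Ico u₀ 1 := by
    constructor
    · rw [htdef]; linarith
    · rw [htdef]; linarith
  have htIoo : t ∈ Ioo (1/2 : ℝ) 1 := ⟨lt_of_lt_of_le hu₀mem.1 htmem.1, htmem.2⟩
  have hGt : G t ≤ B := hantiG (left_mem_Ico.mpr hε1) htmem htmem.1
  have hlogr : Real.log r < -B / C := by
    have h1 : r < Real.exp (-B / C) := by
      calc r ≤ Real.exp (-B / C) / 2 := min_le_right _ _
        _ < Real.exp (-B / C) := by linarith [Real.exp_pos (-B / C)]
    calc Real.log r < Real.log (Real.exp (-B / C)) := Real.log_lt_log hr0 h1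
      _ = -B / C := Real.log_exp _
  have hClogr : C * Real.log r < -B := by
    have := mul_lt_mul_of_pos_left hlogr hC
    rwa [show C * (-B / C) = -B by field_simp] at this
  have hft : f t < 0 := by
    have h1t : 1 - t = r := by rw [htdef]; ring
    have : f t - C * Real.log r ≤ B := by
      have := hGt
      rw [hGdef] at this
      simpa [h1t] using this
    linarith
  exact absurd (hnonneg t htIoo) (by linarith)
end

section
/- Let κ>0 and let 𝒵 be a positive C³ function on {θ₁<θ₂<θ₁+2π} satisfying b₁(θ₁,θ₂)=b₂(θ₂,θ₁) where b_j = κ∂_j log𝒵 (interchangeability), and b_j(θ₁+a,θ₂+a)=b_j(θ₁,θ₂) for all a (rotation invariance). Then there exists λ>0 such that 𝒵(θ₂, θ₁+2π) = λ·𝒵(θ₁,θ₂) for all θ₁<θ₂<θ₁+2π. -/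
open Real Set

/-- for an interchangeable, rotation-invariant partition function
`𝒵`, there is `λ > 0` with `𝒵(θ₂, θ₁+2π) = λ·𝒵(θ₁,θ₂)`. -/
theorem interchangeability_gives_lambda (κ : ℝ) (hκ : 0 < κ) (Z b₁ b₂ : ℝ → ℝ → ℝ)
    (hpos : ∀ θ₁ θ₂ : ℝ, θ₁ < θ₂ → θ₂ < θ₁ + 2 * π → 0 < Z θ₁ θ₂)
    (hC : ContDiffOn ℝ 3 (fun p : ℝ × ℝ => Z p.1 p.2)
      {p : ℝ × ℝ | p.1 < p.2 ∧ p.2 < p.1 + 2 * π})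
    (hb₁ : ∀ θ₁ θ₂ : ℝ, b₁ θ₁ θ₂ = κ * deriv (fun x => Real.log (Z x θ₂)) θ₁)
    (hb₂ : ∀ θ₁ θ₂ : ℝ, b₂ θ₁ θ₂ = κ * deriv (fun y => Real.log (Z θ₁ y)) θ₂)
    (hint : ∀ θ₁ θ₂ : ℝ, θ₁ < θ₂ → θ₂ < θ₁ + 2 * π → b₁ θ₁ θ₂ = b₂ θ₂ (θ₁ + 2 * π))
    (hrot : ∀ a θ₁ θ₂ : ℝ, θ₁ < θ₂ → θ₂ < θ₁ + 2 * π →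
      b₁ (θ₁ + a) (θ₂ + a) = b₁ θ₁ θ₂ ∧ b₂ (θ₁ + a) (θ₂ + a) = b₂ θ₁ θ₂) :
    ∃ lam : ℝ, 0 < lam ∧
      ∀ θ₁ θ₂ : ℝ, θ₁ < θ₂ → θ₂ < θ₁ + 2 * π → Z θ₂ (θ₁ + 2 * π) = lam * Z θ₁ θ₂ := by
  have hπ := Real.pi_pos
  set s : Set (ℝ × ℝ) := {p : ℝ × ℝ | p.1 < p.2 ∧ p.2 < p.1 + 2 * π} with hsdef
  have hsopen : IsOpen s := by
    apply IsOpen.inter (isOpen_lt continuous_fst continuous_snd)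
    exact isOpen_lt continuous_snd (continuous_fst.add continuous_const)
  have hsconv : Convex ℝ s := by
    intro p hp q hq a b ha hb hab
    simp only [hsdef, mem_setOf_eq, Prod.fst_add, Prod.snd_add, Prod.smul_fst, Prod.smul_snd,
      smul_eq_mul] at *
    constructor
    · rcases eq_or_lt_of_le ha with h | h
      · nlinarith [hq.1]
      · nlinarith [hp.1, hq.1]
    · rcases eq_or_lt_of_le ha with h | h
      · nlinarith [hq.2]
      · nlinarith [hp.2, hq.2]
  set g : ℝ × ℝ → ℝ := fun p => Real.log (Z p.1 p.2) with hgdef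
  -- differentiability of g at points of s
  have hZd : DifferentiableOn ℝ (fun p : ℝ × ℝ => Z p.1 p.2) s := by
    exact hC.differentiableOn (by norm_num)
  have hgd : ∀ p ∈ s, DifferentiableAt ℝ g p := by
    intro p hp
    have h1 : DifferentiableAt ℝ (fun p : ℝ × ℝ => Z p.1 p.2) p :=
      (hZd p hp).differentiableAt (hsopen.mem_nhds hp)
    exact h1.log (ne_of_gt (hpos p.1 p.2 hp.1 hp.2))
  -- partial derivatives
  have hpart1 : ∀ p ∈ s, b₁ p.1 p.2 = κ * (fderiv ℝ g p (1, 0)) := by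
    intro p hp
    have h1 : HasDerivAt (fun x : ℝ => (x, p.2)) ((1 : ℝ), (0 : ℝ)) p.1 :=
      HasDerivAt.prodMk (hasDerivAt_id p.1) (hasDerivAt_const p.1 p.2)
    have h2 : HasDerivAt (fun x : ℝ => g (x, p.2)) (fderiv ℝ g p (1, 0)) p.1 :=
      by have := HasFDerivAt.comp_hasDerivAt (l := g) (l' := fderiv ℝ g p) p.1 ((hgd p hp).hasFDerivAt) h1; exact this
    rw [hb₁, h2.deriv]
  have hpart2 : ∀ p ∈ s, b₂ p.1 p.2 = κ * (fderiv ℝ g p (0, 1)) := by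
    intro p hp
    have h1 : HasDerivAt (fun y : ℝ => (p.1, y)) ((0 : ℝ), (1 : ℝ)) p.2 :=
      HasDerivAt.prodMk (hasDerivAt_const p.2 p.1) (hasDerivAt_id p.2)
    have h2 : HasDerivAt (fun y : ℝ => g (p.1, y)) (fderiv ℝ g p (0, 1)) p.2 :=
      by have := HasFDerivAt.comp_hasDerivAt (l := g) (l' := fderiv ℝ g p) p.2 ((hgd p hp).hasFDerivAt) h1; exact this
    rw [hb₂, h2.deriv]
  -- the shift map
  set L : ℝ × ℝ → ℝ × ℝ := fun p => (p.2, p.1 + 2 * π) with hLdef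
  have hLmem : ∀ p ∈ s, L p ∈ s := by
    intro p hp
    exact ⟨hp.2, show p.1 + 2 * π < p.2 + 2 * π by linarith [hp.1]⟩
  set J : ℝ × ℝ →L[ℝ] ℝ × ℝ :=
    (ContinuousLinearMap.snd ℝ ℝ ℝ).prod (ContinuousLinearMap.fst ℝ ℝ ℝ) with hJdef
  have hLd : ∀ p : ℝ × ℝ, HasFDerivAt L J p := by
    intro p
    exact HasFDerivAt.prodMk hasFDerivAt_snd (hasFDerivAt_fst.add_const _)
  set F : ℝ × ℝ → ℝ := fun p => g (L p) - g p with hFdef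
  have hFd : ∀ p ∈ s, HasFDerivAt F ((fderiv ℝ g (L p)).comp J - fderiv ℝ g p) p := by
    intro p hp
    exact (((hgd (L p) (hLmem p hp)).hasFDerivAt).comp p (hLd p)).sub
      ((hgd p hp).hasFDerivAt)
  -- both partials of F vanish on s
  have key1 : ∀ p ∈ s, fderiv ℝ g (L p) (0, 1) = fderiv ℝ g p (1, 0) := by
    intro p hp
    have h := hint p.1 p.2 hp.1 hp.2
    rw [hpart1 p hp] at h
    have h2 := hpart2 (L p) (hLmem p hp)
    simp only [hLdef] at h2
    rw [h2] at h
    exact (mul_left_cancel₀ (ne_of_gt hκ) h.symm)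
  have key2 : ∀ p ∈ s, fderiv ℝ g (L p) (1, 0) = fderiv ℝ g p (0, 1) := by
    intro p hp
    -- b₁ (θ₂) (θ₁+2π) = b₁ (θ₂-2π) θ₁ = b₂ θ₁ θ₂
    have hq : (p.2 - 2 * π) < p.1 ∧ p.1 < (p.2 - 2 * π) + 2 * π := by
      constructor <;> [linarith [hp.2]; linarith [hp.1]]
    have hr := (hrot (2 * π) (p.2 - 2 * π) p.1 hq.1 hq.2).1
    have hi := hint (p.2 - 2 * π) p.1 hq.1 hq.2
    have e1 : p.2 - 2 * π + 2 * π = p.2 := by ring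
    rw [e1] at hr hi
    -- hr : b₁ p.2 (p.1 + 2π) = b₁ (p.2 - 2π) p.1 ; hi : b₁ (p.2-2π) p.1 = b₂ p.1 p.2
    have h : b₁ p.2 (p.1 + 2 * π) = b₂ p.1 p.2 := hr.trans hi
    have h1 := hpart1 (L p) (hLmem p hp)
    simp only [hLdef] at h1
    rw [h1, hpart2 p hp] at h
    exact mul_left_cancel₀ (ne_of_gt hκ) h
  have hFzero : ∀ p ∈ s, HasFDerivAt F (0 : ℝ × ℝ →L[ℝ] ℝ) p := by
    intro p hp
    have hD : ((fderiv ℝ g (L p)).comp J - fderiv ℝ g p) = 0 := by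
      apply ContinuousLinearMap.ext
      intro v
      have hv : v = v.1 • ((1 : ℝ), (0 : ℝ)) + v.2 • ((0 : ℝ), (1 : ℝ)) := by
        simp [Prod.ext_iff]
      rw [hv]
      simp only [ContinuousLinearMap.sub_apply, ContinuousLinearMap.coe_comp',
        Function.comp_apply, map_add, map_smul, ContinuousLinearMap.zero_apply, smul_eq_mul]
      have hJa : J ((1 : ℝ), (0 : ℝ)) = ((0 : ℝ), (1 : ℝ)) := by simp [hJdef]
      have hJb : J ((0 : ℝ), (1 : ℝ)) = ((1 : ℝ), (0 : ℝ)) := by simp [hJdef]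
      rw [hJa, hJb, key1 p hp, key2 p hp]
      ring
    rw [← hD]
    exact hFd p hp
  -- constancy
  have hFdiff : DifferentiableOn ℝ F s := fun p hp => ((hFzero p hp).differentiableAt).differentiableWithinAt
  have hFw : ∀ p ∈ s, fderivWithin ℝ F s p = 0 := by
    intro p hp
    rw [fderivWithin_of_isOpen hsopen hp]
    exact (hFzero p hp).fderiv
  have hp₀ : ((0 : ℝ), π) ∈ s := ⟨hπ, show π < 0 + 2 * π by linarith⟩
  have hconst : ∀ p ∈ s, F p = F (0, π) :=
    fun p hp => hsconv.is_const_of_fderivWithin_eq_zero hFdiff hFw hp hp₀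
  -- conclude
  have hZ0 : 0 < Z 0 π := hpos 0 π hπ (by linarith)
  have hZ1 : 0 < Z π (0 + 2 * π) := hpos π (0 + 2 * π) (by linarith) (by linarith)
  refine ⟨Z π (0 + 2 * π) / Z 0 π, div_pos hZ1 hZ0, ?_⟩
  intro θ₁ θ₂ h1 h2
  have hps : ((θ₁, θ₂) : ℝ × ℝ) ∈ s := ⟨h1, h2⟩
  have hc := hconst (θ₁, θ₂) hps
  simp only [hFdef, hgdef, hLdef] at hc
  -- hc : log (Z θ₂ (θ₁ + 2π)) - log (Z θ₁ θ₂) = log (Z π (0 + 2π)) - log (Z 0 π)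
  have hA : 0 < Z θ₂ (θ₁ + 2 * π) := hpos θ₂ (θ₁ + 2 * π) h2 (by linarith)
  have hB : 0 < Z θ₁ θ₂ := hpos θ₁ θ₂ h1 h2
  have : Real.log (Z θ₂ (θ₁ + 2 * π)) =
      Real.log (Z π (0 + 2 * π) / Z 0 π * Z θ₁ θ₂) := by
    rw [Real.log_mul (by positivity) (ne_of_gt hB), Real.log_div (ne_of_gt hZ1) (ne_of_gt hZ0)]
    linarith [hc]
  have := congrArg Real.exp this
  rwa [Real.exp_log hA, Real.exp_log (by positivity)] at this
end

section
/- Let κ>0 and suppose 𝒵 : (0,2π) → ℝ_{>0} is C², satisfies the symmetry 𝒵(θ)=𝒵(2π−θ), and solves (κ/2)·𝒵''/𝒵 + cot(θ/2)·𝒵'/𝒵 − h/(2(sin(θ/2))²) = F for a constant F, where h=(6−κ)/(2κ). Define u=(sin(θ/4))² and write 𝒵(θ) = C(sin(θ/2))^{−2h}·φ(u) with C=𝒵(π). Then φ is C² on (0,1), satisfies φ(1/2)=1, φ'(1/2)=0, and u(1−u)φ'' + ((3κ−8)/(2κ))(1−2u)φ' + (8/κ)·((6−κ)(κ−2)/(8κ)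 − F)·φ = 0. -/
open Real Set

set_option maxHeartbeats 2000000 in
/-- under the change of variables `u = sin²(θ/4)` and
`𝒵(θ) = C·sin(θ/2)^{-2h}·φ(u)` with `C = 𝒵(π)`, a symmetric solution `𝒵` of
the radial BPZ ODE yields a `C²` solution `φ` of Euler's hypergeometric
equation with `φ(1/2)=1`, `φ'(1/2)=0`. -/
theorem change_of_variables_to_Euler (κ F : ℝ) (hκ : 0 < κ) (Z φ : ℝ → ℝ)
    (hpos : ∀ θ ∈ Ioo (0 : ℝ) (2 * π), 0 < Z θ)
    (hC : ContDiffOn ℝ 2 Z (Ioo (0 : ℝ) (2 * π)))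
    (hsym : ∀ θ ∈ Ioo (0 : ℝ) (2 * π), Z θ = Z (2 * π - θ))
    (hode : ∀ θ ∈ Ioo (0 : ℝ) (2 * π),
      κ / 2 * deriv (deriv Z) θ / Z θ + Real.cot (θ / 2) * deriv Z θ / Z θ
        - (6 - κ) / (2 * κ) / (2 * Real.sin (θ / 2) ^ 2) = F)
    (hφ : ∀ θ ∈ Ioo (0 : ℝ) (2 * π),
      Z θ = Z π * Real.sin (θ / 2) ^ (-(2 * ((6 - κ) / (2 * κ))))
        * φ (Real.sin (θ / 4) ^ 2)) :
    ContDiffOn ℝ 2 φ (Ioo (0 : ℝ) 1) ∧ φ (1 / 2) = 1 ∧ deriv φ (1 / 2) = 0 ∧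
      ∀ u ∈ Ioo (0 : ℝ) 1,
        u * (1 - u) * deriv (deriv φ) u + (3 * κ - 8) / (2 * κ) * (1 - 2 * u) * deriv φ u
          + 8 / κ * ((6 - κ) * (κ - 2) / (8 * κ) - F) * φ u = 0 := by
  have pi_pos := Real.pi_pos
  have hπmem : π ∈ Ioo (0:ℝ) (2*π) := ⟨pi_pos, by linarith⟩
  have hZπ : 0 < Z π := hpos π hπmem
  have hκ0 : κ ≠ 0 := ne_of_gt hκ
  set b : ℝ := (6 - κ) / (2 * κ) with hb
  -- basic trig facts on (0, 2π)
  have hsin2pos : ∀ θ ∈ Ioo (0:ℝ) (2*π), 0 < Real.sin (θ/2) := by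
    intro θ hθ
    exact Real.sin_pos_of_pos_of_lt_pi (by linarith [hθ.1]) (by linarith [hθ.2])
  have hsin4mem : ∀ θ ∈ Ioo (0:ℝ) (2*π), Real.sin (θ/4) ^ 2 ∈ Ioo (0:ℝ) 1 := by
    intro θ hθ
    have h1 : 0 < Real.sin (θ/4) :=
      Real.sin_pos_of_pos_of_lt_pi (by linarith [hθ.1]) (by linarith [hθ.2, pi_pos])
    have h2 : 0 < Real.cos (θ/4) :=
      Real.cos_pos_of_mem_Ioo ⟨by linarith [hθ.1, pi_pos], by linarith [hθ.2]⟩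
    have h3 := Real.sin_sq_add_cos_sq (θ/4)
    constructor
    · positivity
    · nlinarith
  have hs2eq : ∀ θ : ℝ, Real.sin (θ/2) ^ 2
      = 4 * (Real.sin (θ/4) ^ 2 * (1 - Real.sin (θ/4) ^ 2)) := by
    intro θ
    rw [show θ/2 = 2*(θ/4) by ring, Real.sin_two_mul]
    linear_combination (4 * Real.sin (θ/4) ^ 2) * Real.sin_sq_add_cos_sq (θ/4)
  have hceq : ∀ θ : ℝ, Real.cos (θ/2) = 1 - 2 * Real.sin (θ/4) ^ 2 := by
    intro θ
    rw [show θ/2 = 2*(θ/4) by ring, Real.cos_two_mul]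
    linear_combination 2 * Real.sin_sq_add_cos_sq (θ/4)
  -- the inverse change of variables
  set t : ℝ → ℝ := fun u => 4 * Real.arcsin (Real.sqrt u) with htdef
  have hsqrtmem : ∀ u ∈ Ioo (0:ℝ) 1, Real.sqrt u ∈ Ioo (0:ℝ) 1 := by
    intro u hu
    refine ⟨Real.sqrt_pos.2 hu.1, ?_⟩
    rw [show (1:ℝ) = Real.sqrt 1 by simp]
    exact Real.sqrt_lt_sqrt hu.1.le hu.2
  have htmem : ∀ u ∈ Ioo (0:ℝ) 1, t u ∈ Ioo (0:ℝ) (2*π) := by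
    intro u hu
    have h1 : 0 < Real.arcsin (Real.sqrt u) := Real.arcsin_pos.2 (hsqrtmem u hu).1
    have h2 : Real.arcsin (Real.sqrt u) < π/2 :=
      Real.arcsin_lt_pi_div_two.2 (hsqrtmem u hu).2
    exact ⟨by simp only [htdef]; linarith, by simp only [htdef]; linarith⟩
  have htval : ∀ u ∈ Ioo (0:ℝ) 1, Real.sin (t u / 4) ^ 2 = u := by
    intro u hu
    have h4 : t u / 4 = Real.arcsin (Real.sqrt u) := by simp only [htdef]; ring
    rw [h4, Real.sin_arcsin (by linarith [Real.sqrt_nonneg u]) (hsqrtmem u hu).2.le, Real.sq_sqrt hu.1.le]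
  -- φ agrees with an explicit C² function on (0,1)
  have hφeq : ∀ u ∈ Ioo (0:ℝ) 1, φ u = Z (t u) * (4*(u*(1-u))) ^ b / Z π := by
    intro u hu
    have hθ := htmem u hu
    have h1 := hφ (t u) hθ
    rw [htval u hu] at h1
    have hs := hsin2pos _ hθ
    have hr2 : (4*(u*(1-u))) ^ b = Real.sin (t u / 2) ^ (2*b) := by
      have h2 : Real.sin (t u / 2) ^ 2 = 4*(u*(1-u)) := by
        rw [hs2eq (t u), htval u hu]
      rw [← h2, ← Real.rpow_natCast (Real.sin (t u / 2)) 2, ← Real.rpow_mul hs.le]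
      norm_num
    have hA : (0:ℝ) < Real.sin (t u / 2) ^ (2*b) := Real.rpow_pos_of_pos hs _
    rw [hr2, h1, Real.rpow_neg hs.le]
    field_simp
  have hφC2 : ContDiffOn ℝ 2 φ (Ioo (0:ℝ) 1) := by
    have hgC : ContDiffOn ℝ 2 (fun u => Z (t u) * (4*(u*(1-u))) ^ b / Z π) (Ioo (0:ℝ) 1) := by
      intro u hu
      apply ContDiffAt.contDiffWithinAt
      have ht : ContDiffAt ℝ 2 t u := by
        have h1 : ContDiffAt ℝ 2 Real.arcsin (Real.sqrt u) :=
          Real.contDiffAt_arcsin (by nlinarith [(hsqrtmem u hu).1]) (ne_of_lt (hsqrtmem u hu).2)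
        have h2 : ContDiffAt ℝ 2 Real.sqrt u := Real.contDiffAt_sqrt (ne_of_gt hu.1)
        exact contDiffAt_const.mul (h1.comp u h2)
      have hZt : ContDiffAt ℝ 2 (fun v => Z (t v)) u :=
        (hC.contDiffAt (isOpen_Ioo.mem_nhds (htmem u hu))).comp u ht
      have hr : ContDiffAt ℝ 2 (fun v : ℝ => (4*(v*(1-v))) ^ b) u := by
        have hpos4 : 4*(u*(1-u)) ≠ 0 := by nlinarith [hu.1, hu.2]
        have hpoly : ContDiffAt ℝ 2 (fun v : ℝ => 4*(v*(1-v))) u :=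
          (contDiff_const.mul (contDiff_id.mul (contDiff_const.sub contDiff_id))).contDiffAt
        exact (Real.contDiffAt_rpow_const_of_ne hpos4).comp u hpoly
      exact (hZt.mul hr).div_const (Z π)
    exact hgC.congr hφeq
  have hval : φ (1/2) = 1 := by
    have h1 := hφ π hπmem
    rw [Real.sin_pi_div_two, Real.one_rpow] at h1
    have h2 : Real.sin (π/4) ^ 2 = 1/2 := by
      rw [Real.sin_pi_div_four, div_pow, Real.sq_sqrt] <;> norm_num
    rw [h2, mul_one] at h1
    have h3 : Z π * φ (1/2) = Z π * 1 := by linarith [h1]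
    exact mul_left_cancel₀ hZπ.ne' h3
  have hsymφ : ∀ u ∈ Ioo (0:ℝ) 1, φ (1 - u) = φ u := by
    intro u hu
    have hθ := htmem u hu
    have hθ' : 2*π - t u ∈ Ioo (0:ℝ) (2*π) := ⟨by linarith [hθ.2], by linarith [hθ.1]⟩
    have h1 := hφ (t u) hθ
    have h2 := hφ (2*π - t u) hθ'
    have e1 : (2*π - t u)/2 = π - t u/2 := by ring
    have e2 : (2*π - t u)/4 = π/2 - t u/4 := by ring
    rw [e1, Real.sin_pi_sub, e2, Real.sin_pi_div_two_sub] at h2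
    have e3 : Real.cos (t u/4) ^ 2 = 1 - u := by
      have h5 := Real.sin_sq_add_cos_sq (t u/4)
      have h4 := htval u hu
      linarith
    rw [e3] at h2
    rw [htval u hu, hsym (t u) hθ, h2] at h1
    exact (mul_left_cancel₀ (mul_pos hZπ (Real.rpow_pos_of_pos (hsin2pos _ hθ) _)).ne' h1)
  have hmem12 : (1/2 : ℝ) ∈ Ioo (0:ℝ) 1 := by norm_num
  have hderiv0 : deriv φ (1/2) = 0 := by
    have hdiff : DifferentiableAt ℝ φ (1/2) :=
      (hφC2.differentiableOn two_ne_zero).differentiableAt (isOpen_Ioo.mem_nhds hmem12)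
    have h2 : HasDerivAt (fun v : ℝ => 1 - v) (-1) (1/2 : ℝ) := by
      simpa using ((hasDerivAt_id (1/2:ℝ)).const_sub 1)
    have h3 : HasDerivAt φ (deriv φ (1/2)) ((fun v : ℝ => 1 - v) (1/2:ℝ)) := by
      norm_num
      exact hdiff
    have h4 : HasDerivAt (fun v => φ (1 - v)) (deriv φ (1/2) * (-1)) (1/2:ℝ) :=
      h3.comp _ h2
    have h5 : HasDerivAt φ (deriv φ (1/2) * (-1)) (1/2:ℝ) := by
      refine h4.congr_of_eventuallyEq ?_
      filter_upwards [isOpen_Ioo.mem_nhds hmem12] with x hx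
      exact (hsymφ x hx).symm
    have h6 := h5.deriv
    linarith [h6]
  refine ⟨hφC2, hval, hderiv0, ?_⟩
  intro u hu
  have hθ := htmem u hu
  have hwθ : Real.sin (t u / 4) ^ 2 = u := htval u hu
  have hspos : 0 < Real.sin (t u / 2) := hsin2pos _ hθ
  have hs2 : Real.sin (t u / 2) ^ 2 = 4*(u*(1-u)) := by rw [hs2eq (t u), hwθ]
  have hcθ : Real.cos (t u / 2) = 1 - 2*u := by rw [hceq (t u), hwθ]
  have hφdiffOn : DifferentiableOn ℝ φ (Ioo (0:ℝ) 1) := hφC2.differentiableOn two_ne_zero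
  have hφ1C : ContDiffOn ℝ 1 (deriv φ) (Ioo (0:ℝ) 1) :=
    hφC2.deriv_of_isOpen isOpen_Ioo (by norm_num)
  have hφ1diffOn : DifferentiableOn ℝ (deriv φ) (Ioo (0:ℝ) 1) := hφ1C.differentiableOn one_ne_zero
  have hhalf : ∀ x : ℝ, HasDerivAt (fun y : ℝ => y/2) (1/2) x := fun x => by
    simpa using (hasDerivAt_id x).div_const 2
  have hquarter : ∀ x : ℝ, HasDerivAt (fun y : ℝ => y/4) (1/4) x := fun x => by
    simpa using (hasDerivAt_id x).div_const 4
  have hS : ∀ x : ℝ, HasDerivAt (fun y : ℝ => Real.sin (y/2)) (Real.cos (x/2) * (1/2)) x :=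
    fun x => (hhalf x).sin
  have hW : ∀ x : ℝ, HasDerivAt (fun y : ℝ => Real.sin (y/4) ^ 2)
      (Real.sin (x/2) * (1/4)) x := by
    intro x
    have h : HasDerivAt (fun y : ℝ => Real.sin (y/4) ^ 2) _ x := ((hquarter x).sin).pow 2
    convert h using 1
    rw [show x/2 = 2*(x/4) by ring, Real.sin_two_mul]
    push_cast
    ring
  have hP : ∀ x ∈ Ioo (0:ℝ) (2*π), HasDerivAt (fun y : ℝ => Z π * Real.sin (y/2) ^ (-(2*b)))
      (Z π * (-(2*b) * Real.sin (x/2) ^ (-(2*b)-1) * (Real.cos (x/2) * (1/2)))) x := by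
    intro x hx
    have h : HasDerivAt (fun y : ℝ => Z π * Real.sin (y/2) ^ (-(2*b))) _ x := ((hS x).rpow_const (p := -(2*b)) (Or.inl (hsin2pos x hx).ne')).const_mul (Z π)
    convert h using 1
    ring
  have hφw : ∀ x ∈ Ioo (0:ℝ) (2*π), HasDerivAt (fun y : ℝ => φ (Real.sin (y/4) ^ 2))
      (deriv φ (Real.sin (x/4) ^ 2) * (Real.sin (x/2) * (1/4))) x := by
    intro x hx
    have hdφ : HasDerivAt φ (deriv φ (Real.sin (x/4) ^ 2)) (Real.sin (x/4) ^ 2) :=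
      (hφdiffOn.differentiableAt (isOpen_Ioo.mem_nhds (hsin4mem x hx))).hasDerivAt
    exact hdφ.comp x (hW x)
  have hZD : ∀ x ∈ Ioo (0:ℝ) (2*π), HasDerivAt Z
      (Z π * (-(2*b) * Real.sin (x/2) ^ (-(2*b)-1) * (Real.cos (x/2) * (1/2))) * φ (Real.sin (x/4) ^ 2) + Z π * Real.sin (x/2) ^ (-(2*b)) * (deriv φ (Real.sin (x/4) ^ 2) * (Real.sin (x/2) * (1/4)))) x := by
    intro x hx
    have h1 : HasDerivAt (fun y : ℝ => Z π * Real.sin (y/2) ^ (-(2*b)) * φ (Real.sin (y/4) ^ 2))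
        (Z π * (-(2*b) * Real.sin (x/2) ^ (-(2*b)-1) * (Real.cos (x/2) * (1/2))) * φ (Real.sin (x/4) ^ 2) + Z π * Real.sin (x/2) ^ (-(2*b)) * (deriv φ (Real.sin (x/4) ^ 2) * (Real.sin (x/2) * (1/4)))) x := (hP x hx).mul (hφw x hx)
    refine h1.congr_of_eventuallyEq ?_
    filter_upwards [isOpen_Ioo.mem_nhds hx] with y hy
    exact hφ y hy
  have hev : deriv Z =ᶠ[nhds (t u)] (fun x : ℝ =>
      Z π * (-(2*b) * Real.sin (x/2) ^ (-(2*b)-1) * (Real.cos (x/2) * (1/2))) * φ (Real.sin (x/4) ^ 2) + Z π * Real.sin (x/2) ^ (-(2*b)) * (deriv φ (Real.sin (x/4) ^ 2) * (Real.sin (x/2) * (1/4)))) := by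
    filter_upwards [isOpen_Ioo.mem_nhds hθ] with y hy
    exact (hZD y hy).deriv
  have hA2 : HasDerivAt (fun y : ℝ => Real.sin (y/2) ^ (-(2*b)-1))
      ((-(2*b)-1) * Real.sin (t u/2) ^ (-(2*b)-1-1) * (Real.cos (t u/2) * (1/2))) (t u) := by
    have h := (hS (t u)).rpow_const (p := -(2*b)-1) (Or.inl hspos.ne')
    convert h using 1
    ring
  have hcs : HasDerivAt (fun y : ℝ => Real.cos (y/2)) (-Real.sin (t u/2) * (1/2)) (t u) :=
    (hhalf (t u)).cos
  have hφ1w : HasDerivAt (fun y : ℝ => deriv φ (Real.sin (y/4) ^ 2))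
      (deriv (deriv φ) (Real.sin (t u/4) ^ 2) * (Real.sin (t u/2) * (1/4))) (t u) := by
    have hdφ1 : HasDerivAt (deriv φ) (deriv (deriv φ) (Real.sin (t u/4) ^ 2)) (Real.sin (t u/4) ^ 2) :=
      (hφ1diffOn.differentiableAt (isOpen_Ioo.mem_nhds (hsin4mem _ hθ))).hasDerivAt
    exact hdφ1.comp (t u) (hW (t u))
  have hDd : HasDerivAt (fun x : ℝ =>
      Z π * (-(2*b) * Real.sin (x/2) ^ (-(2*b)-1) * (Real.cos (x/2) * (1/2))) * φ (Real.sin (x/4) ^ 2) + Z π * Real.sin (x/2) ^ (-(2*b)) * (deriv φ (Real.sin (x/4) ^ 2) * (Real.sin (x/2) * (1/4))))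
      ((Z π * (-(2*b) * ((-(2*b)-1) * Real.sin (t u/2) ^ (-(2*b)-1-1) * (Real.cos (t u/2) * (1/2))) * (Real.cos (t u/2) * (1/2)) + -(2*b) * Real.sin (t u/2) ^ (-(2*b)-1) * (-Real.sin (t u/2) * (1/2) * (1/2))) * φ (Real.sin (t u/4) ^ 2) + Z π * (-(2*b) * Real.sin (t u/2) ^ (-(2*b)-1) * (Real.cos (t u/2) * (1/2))) * (deriv φ (Real.sin (t u/4) ^ 2) * (Real.sin (t u/2) * (1/4)))) + (Z π * (-(2*b) * Real.sin (t u/2) ^ (-(2*b)-1) * (Real.cos (t u/2) * (1/2))) * (deriv φ (Real.sin (t u/4) ^ 2) * (Real.sin (t u/2) * (1/4))) + Z π * Real.sin (t u/2) ^ (-(2*b)) * (deriv (deriv φ) (Real.sin (t u/4) ^ 2) * (Real.sin (t u/2) * (1/4)) * (Real.sin (t u/2) * (1/4)) + deriv φ (Real.sin (t u/4) ^ 2) * (Real.cos (t u/2) * (1/2) * (1/4))))) (t u) :=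
    ((((hA2.const_mul (-(2*b))).mul (hcs.mul_const (1/2))).const_mul (Z π)).mul (hφw _ hθ)).add
      ((hP _ hθ).mul (hφ1w.mul ((hS (t u)).mul_const (1/4))))
  have hodeθ := hode (t u) hθ
  rw [Real.cot_eq_cos_div_sin] at hodeθ
  rw [(hZD (t u) hθ).deriv] at hodeθ
  rw [hev.deriv_eq, hDd.deriv] at hodeθ
  have hφθu : Z (t u) = Z π * Real.sin (t u/2) ^ (-(2*b)) * φ u := by
    have h1 := hφ _ hθ
    rwa [hwθ] at h1
  rw [hφθu] at hodeθ
  simp only [hwθ] at hodeθ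
  simp only [Real.rpow_sub hspos, Real.rpow_one] at hodeθ
  have hApos : (0:ℝ) < Real.sin (t u/2) ^ (-(2*b)) := Real.rpow_pos_of_pos hspos _
  have hφupos : 0 < φ u := by
    have h0 := hpos _ hθ
    rw [hφθu] at h0
    by_contra hcon
    push_neg at hcon
    nlinarith [mul_pos hZπ hApos]
  have h1u : (1:ℝ) - u ≠ 0 := sub_ne_zero.2 (ne_of_gt hu.2)
  have hF : F = κ/2 * ((b^2+b/2) * Real.cos (t u/2)^2 / Real.sin (t u/2)^2 + b/2
      + (-(b * Real.cos (t u/2))/2 + Real.cos (t u/2)/8) * (deriv φ u / φ u)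
      + Real.sin (t u/2)^2/16 * (deriv (deriv φ) u / φ u))
      + (-(b * Real.cos (t u/2)^2)/Real.sin (t u/2)^2 + Real.cos (t u/2) * deriv φ u/(4 * φ u))
      - b/(2 * Real.sin (t u/2)^2) := by
    rw [← hodeθ]
    field_simp
    ring
  rw [hs2, hcθ] at hF
  rw [hF, hb]
  have hu0 : u ≠ 0 := hu.1.ne'
  field_simp [hκ0, hu0, h1u, hφupos.ne']
  ring
end

section
/- Let 𝒰 : (0,2π) → ℝ be differentiable, satisfy 𝒰(θ)=𝒰(2π−θ), and suppose (𝒰'(θ) + cot(θ/2))² = C + (3 + (cos(θ/2))²)/(sin(θ/2))² for all θ∈(0,2π) and some constant C. Then C = −3 and for each θ, 𝒰'(θ) = cot(θ/2) or 𝒰'(θ) = −3cot(θ/2). -/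
open Real Set

/-- a symmetric differentiable `𝒰` on `(0,2π)` satisfying the
quadratic relation `(𝒰' + cot(θ/2))² = C + (3 + cos²(θ/2))/sin²(θ/2)` forces
`C = -3` and `𝒰'(θ) ∈ {cot(θ/2), -3cot(θ/2)}` at each point. -/
theorem quadratic_relation_forces_branches (U : ℝ → ℝ) (C : ℝ)
    (hdiff : ∀ θ ∈ Ioo (0 : ℝ) (2 * π), DifferentiableAt ℝ U θ)
    (hsym : ∀ θ ∈ Ioo (0 : ℝ) (2 * π), U θ = U (2 * π - θ))
    (heq : ∀ θ ∈ Ioo (0 : ℝ) (2 * π),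
      (deriv U θ + Real.cot (θ / 2)) ^ 2
        = C + (3 + Real.cos (θ / 2) ^ 2) / Real.sin (θ / 2) ^ 2) :
    C = -3 ∧ ∀ θ ∈ Ioo (0 : ℝ) (2 * π),
      deriv U θ = Real.cot (θ / 2) ∨ deriv U θ = -3 * Real.cot (θ / 2) := by
  have hπ : π ∈ Ioo (0 : ℝ) (2 * π) := by
    constructor <;> nlinarith [pi_pos]
  -- symmetry forces deriv U π = 0
  have hEv : U =ᶠ[nhds π] fun θ => U (2 * π - θ) := by
    filter_upwards [isOpen_Ioo.mem_nhds hπ] with θ hθ using hsym θ hθ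
  have hderiv : deriv U π = - deriv U π := by
    calc deriv U π = deriv (fun θ => U (2 * π - θ)) π := hEv.deriv_eq
      _ = - deriv U (2 * π - π) := deriv_comp_const_sub U (2 * π) π
      _ = - deriv U π := by norm_num; ring_nf
  have hd0 : deriv U π = 0 := by linarith
  have hheq := heq π hπ
  rw [hd0] at hheq
  have hcot : Real.cot (π / 2) = 0 := by
    rw [Real.cot_eq_cos_div_sin, Real.cos_pi_div_two]; simp
  have hC : C = -3 := by
    rw [hcot, Real.cos_pi_div_two, Real.sin_pi_div_two] at hheq
    norm_num at hheq
    linarith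
  refine ⟨hC, fun θ hθ => ?_⟩
  have hs : Real.sin (θ / 2) ≠ 0 := by
    have : 0 < Real.sin (θ / 2) := Real.sin_pos_of_pos_of_lt_pi (by linarith [hθ.1]) (by linarith [hθ.2])
    linarith
  have hθeq := heq θ hθ
  rw [hC] at hθeq
  have hpyth := Real.sin_sq_add_cos_sq (θ / 2)
  have hkey : (deriv U θ + Real.cot (θ / 2)) ^ 2 = (2 * Real.cot (θ / 2)) ^ 2 := by
    rw [hθeq, Real.cot_eq_cos_div_sin]
    field_simp
    nlinarith [sq_nonneg (Real.sin (θ/2))]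
  have h2 : deriv U θ + Real.cot (θ/2) = 2 * Real.cot (θ/2) ∨
      deriv U θ + Real.cot (θ/2) = -(2 * Real.cot (θ/2)) := sq_eq_sq_iff_eq_or_eq_neg.mp hkey
  rcases h2 with h | h
  · left; linarith
  · right; linarith
end
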